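/- arXiv:1507.00802 — 7 statements merged into one kernel-verified Lean document; each statement's English description precedes it below -/
import Mathlib

section
/- For any λ > -1 and θ > 0, the quantity J_λ(t) := e^{-2θt} ∫₀ᵗ∫₀ᵗ e^{θs} e^{θr} |s-r|^λ dr ds converges to Γ(λ+1)/θ^{λ+2} as t → ∞. -/
open Real Filter intervalIntegral MeasureTheory Set

namespace Stmt0

lemma base_int {q c : ℝ} (hq : -1 < q) (hc : 0 < c) :
    IntegrableOn (fun x => Real.exp (-(c * x)) * x ^ q) (Ioi (0:ℝ)) := by
  have h := integrableOn_rpow_mul_exp_neg_mul_rpow hq one_pos hc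
  refine h.congr_fun (fun x hx => ?_) measurableSet_Ioi
  simp [rpow_one, neg_mul, mul_comm]

lemma base_val {q c : ℝ} (hq : -1 < q) (hc : 0 < c) :
    ∫ x in Ioi (0:ℝ), Real.exp (-(c * x)) * x ^ q = Real.Gamma (q+1) / c ^ (q+1) := by
  have h := integral_rpow_mul_exp_neg_mul_rpow one_pos hq hc
  simp only [rpow_one, div_one] at h
  rw [show (∫ x in Ioi (0:ℝ), Real.exp (-(c * x)) * x ^ q)
      = ∫ x in Ioi (0:ℝ), x ^ q * Real.exp (-c * x) from
    setIntegral_congr_fun measurableSet_Ioi (fun x hx => by rw [neg_mul, mul_comm]), h,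
    Real.rpow_neg hc.le]
  ring

lemma exp_int {c : ℝ} (hc : 0 < c) :
    IntegrableOn (fun x => Real.exp (-(c * x))) (Ioi (0:ℝ)) := by
  have h := base_int (q := 0) (by norm_num) hc
  refine h.congr_fun (fun x hx => ?_) measurableSet_Ioi
  simp

lemma exp_val {c : ℝ} (hc : 0 < c) :
    ∫ x in Ioi (0:ℝ), Real.exp (-(c * x)) = 1 / c := by
  have h := base_val (q := 0) (by norm_num) hc
  rw [show (∫ x in Ioi (0:ℝ), Real.exp (-(c * x)))
      = ∫ x in Ioi (0:ℝ), Real.exp (-(c * x)) * x ^ (0:ℝ) from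
    setIntegral_congr_fun measurableSet_Ioi (fun x hx => by simp), h]
  simp [Real.Gamma_one, Real.rpow_one]

lemma shift_val (f : ℝ → ℝ) (c : ℝ) :
    ∫ x in Ioi c, f x = ∫ u in Ioi (0:ℝ), f (u + c) := by
  rw [← MeasureTheory.integral_indicator measurableSet_Ioi,
    ← MeasureTheory.integral_indicator measurableSet_Ioi,
    ← MeasureTheory.integral_add_right_eq_self (fun x => Set.indicator (Ioi c) f x) c]
  congr 1; ext u
  simp [Set.indicator_apply, Set.mem_Ioi, lt_add_iff_pos_left]

lemma shift_int {f : ℝ → ℝ} {c : ℝ} (h : IntegrableOn (fun u => f (u + c)) (Ioi 0)) :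
    IntegrableOn f (Ioi c) := by
  rw [← integrable_indicator_iff measurableSet_Ioi] at h ⊢
  have h2 := MeasureTheory.Integrable.comp_sub_right h c
  refine h2.congr (Filter.Eventually.of_forall fun x => ?_)
  simp only [Set.indicator_apply, Set.mem_Ioi]
  by_cases hx : c < x
  · simp [hx, sub_pos.mpr hx, sub_add_cancel]
  · have : ¬ (0 < x - c) := fun h' => hx (by linarith)
    simp [hx, this]

lemma expIoi_int {c : ℝ} (hc : 0 < c) (u : ℝ) :
    IntegrableOn (fun x => Real.exp (-(c * x))) (Ioi u) := by
  refine shift_int ?_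
  refine IntegrableOn.congr_fun ((exp_int hc).const_mul (Real.exp (-(c*u)))) (fun v hv => ?_) measurableSet_Ioi
  rw [← Real.exp_add]; ring_nf

lemma expIoi_val {c : ℝ} (hc : 0 < c) (u : ℝ) :
    ∫ x in Ioi u, Real.exp (-(c * x)) = Real.exp (-(c * u)) / c := by
  rw [shift_val]
  rw [show (∫ v in Ioi (0:ℝ), Real.exp (-(c * (v + u))))
      = ∫ v in Ioi (0:ℝ), Real.exp (-(c*u)) * Real.exp (-(c * v)) from
    setIntegral_congr_fun measurableSet_Ioi (fun v hv => by rw [← Real.exp_add]; ring_nf),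
    MeasureTheory.integral_const_mul, exp_val hc]
  ring

noncomputable def P (θ lam t : ℝ) : ℝ := ∫ u in (0:ℝ)..t, Real.exp (θ*u) * u ^ lam

noncomputable def K (θ lam : ℝ) : ℝ := Real.Gamma (lam+1) / θ ^ (lam+1)

variable {lam θ : ℝ}

lemma K_pos (hlam : -1 < lam) (hθ : 0 < θ) : 0 < K θ lam :=
  div_pos (Real.Gamma_pos_of_pos (by linarith)) (Real.rpow_pos_of_pos hθ _)

lemma eI (hlam : -1 < lam) (θ a b : ℝ) :
    IntervalIntegrable (fun u => Real.exp (θ*u) * u ^ lam) volume a b :=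
  (intervalIntegrable_rpow' hlam).continuousOn_mul
    (Real.continuous_exp.comp (continuous_const.mul continuous_id)).continuousOn

lemma contP (hlam : -1 < lam) (θ : ℝ) : Continuous (P θ lam) := by
  unfold P
  exact intervalIntegral.continuous_primitive (fun a b => eI hlam θ a b) 0

lemma mrpow (lam : ℝ) : Measurable fun x : ℝ => x ^ lam :=
  measurable_of_continuousOn_compl_singleton 0
    (fun x hx => (Real.continuousAt_rpow_const x lam (Or.inl hx)).continuousWithinAt)

lemma H_meas (θ lam : ℝ) :
    Measurable (fun p : ℝ × ℝ => Real.exp (-(θ*p.1)) * (Real.exp (-(θ*p.2)) * |p.1 - p.2| ^ lam)) := by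
  have h1 : Measurable (fun p : ℝ × ℝ => |p.1 - p.2| ^ lam) :=
    (mrpow lam).comp (measurable_fst.sub measurable_snd).abs
  exact ((measurable_fst.const_mul θ).neg.exp).mul
    (((measurable_snd.const_mul θ).neg.exp).mul h1)

lemma P_nonneg (hlam : -1 < lam) (hθ : 0 < θ) {a : ℝ} (ha : 0 ≤ a) : 0 ≤ P θ lam a := by
  refine intervalIntegral.integral_nonneg ha (fun u hu => ?_)
  exact mul_nonneg (Real.exp_nonneg _) (Real.rpow_nonneg hu.1 _)

lemma P_le (hlam : -1 < lam) (hθ : 0 < θ) {a : ℝ} (ha : 0 ≤ a) :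
    P θ lam a ≤ Real.exp (θ*a) * (a ^ (lam+1) / (lam+1)) := by
  have h1 : P θ lam a ≤ ∫ u in (0:ℝ)..a, Real.exp (θ*a) * u ^ lam := by
    refine intervalIntegral.integral_mono_on ha (eI hlam θ 0 a)
      ((intervalIntegrable_rpow' hlam).const_mul _) (fun u hu => ?_)
    exact mul_le_mul_of_nonneg_right (Real.exp_le_exp.2 (mul_le_mul_of_nonneg_left hu.2 hθ.le))
      (Real.rpow_nonneg hu.1 _)
  calc P θ lam a ≤ _ := h1
    _ = Real.exp (θ*a) * (a ^ (lam+1) / (lam+1)) := by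
      rw [intervalIntegral.integral_const_mul, integral_rpow (Or.inl hlam)]
      rw [Real.zero_rpow (by linarith : lam + 1 ≠ 0)]
      ring

lemma Ioc_val (hlam : -1 < lam) (hθ : 0 < θ) {a : ℝ} (ha : 0 ≤ a) :
    ∫ b in Ioc (0:ℝ) a, Real.exp (-(θ*b)) * (a - b) ^ lam = Real.exp (-(θ*a)) * P θ lam a := by
  rw [← intervalIntegral.integral_of_le ha]
  have h2 := intervalIntegral.integral_comp_sub_left (a := 0) (b := a)
    (fun u => Real.exp (-(θ*(a - u))) * u ^ lam) a
  simp only [sub_sub_cancel, sub_self, sub_zero] at h2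
  rw [h2, P, ← intervalIntegral.integral_const_mul]
  refine intervalIntegral.integral_congr (fun u _ => ?_)
  rw [← mul_assoc, ← Real.exp_add]; ring_nf

lemma Ioc_int (hlam : -1 < lam) (hθ : 0 < θ) {a : ℝ} (ha : 0 ≤ a) :
    IntegrableOn (fun b => Real.exp (-(θ*b)) * (a - b) ^ lam) (Ioc (0:ℝ) a) := by
  rw [← intervalIntegrable_iff_integrableOn_Ioc_of_le ha]
  have h := (((eI hlam θ 0 a).comp_sub_left a).symm.const_mul (Real.exp (-(θ*a))))
  simp only [sub_self, sub_zero] at h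
  have heq : (fun b => Real.exp (-(θ*b)) * (a - b) ^ lam)
      = fun x => Real.exp (-(θ*a)) * (Real.exp (θ*(a - x)) * (a - x) ^ lam) := by
    funext x; rw [← mul_assoc, ← Real.exp_add]; ring_nf
  rw [heq]; exact h

lemma Ioi_val (hlam : -1 < lam) (hθ : 0 < θ) (a : ℝ) :
    ∫ b in Ioi a, Real.exp (-(θ*b)) * (b - a) ^ lam = Real.exp (-(θ*a)) * K θ lam := by
  rw [shift_val]
  rw [show (∫ u in Ioi (0:ℝ), Real.exp (-(θ*(u + a))) * (u + a - a) ^ lam)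
      = ∫ u in Ioi (0:ℝ), Real.exp (-(θ*a)) * (Real.exp (-(θ*u)) * u ^ lam) from
    setIntegral_congr_fun measurableSet_Ioi (fun u hu => by
      rw [add_sub_cancel_right, ← mul_assoc, ← Real.exp_add]; ring_nf),
    MeasureTheory.integral_const_mul, base_val hlam hθ, K]

lemma Ioi_int (hlam : -1 < lam) (hθ : 0 < θ) (a : ℝ) :
    IntegrableOn (fun b => Real.exp (-(θ*b)) * (b - a) ^ lam) (Ioi a) := by
  refine shift_int ?_
  refine IntegrableOn.congr_fun ((base_int hlam hθ).const_mul (Real.exp (-(θ*a)))) (fun u hu => ?_) measurableSet_Ioi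
  rw [add_sub_cancel_right, ← mul_assoc, ← Real.exp_add]; ring_nf

section inner

variable (hlam : -1 < lam) (hθ : 0 < θ)
include hlam hθ

lemma inner_pieces {a : ℝ} (ha : 0 ≤ a) :
    IntegrableOn (fun b => Real.exp (-(θ*b)) * |a - b| ^ lam) (Ioc (0:ℝ) a) ∧
    IntegrableOn (fun b => Real.exp (-(θ*b)) * |a - b| ^ lam) (Ioi a) := by
  constructor
  · refine (Ioc_int hlam hθ ha).congr_fun (fun b hb => ?_) measurableSet_Ioc
    simp only [abs_of_nonneg (sub_nonneg.2 hb.2)]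
  · refine (Ioi_int hlam hθ a).congr_fun (fun b hb => ?_) measurableSet_Ioi
    simp only [abs_sub_comm a b, abs_of_nonneg (sub_nonneg.2 (le_of_lt (mem_Ioi.mp hb)))]

lemma inner_int {a : ℝ} (ha : 0 ≤ a) :
    IntegrableOn (fun b => Real.exp (-(θ*b)) * |a - b| ^ lam) (Ioi (0:ℝ)) := by
  rw [← Ioc_union_Ioi_eq_Ioi ha]
  exact (inner_pieces hlam hθ ha).1.union (inner_pieces hlam hθ ha).2

lemma inner_val {a : ℝ} (ha : 0 ≤ a) :
    ∫ b in Ioi (0:ℝ), Real.exp (-(θ*b)) * |a - b| ^ lam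
      = Real.exp (-(θ*a)) * (P θ lam a + K θ lam) := by
  rw [← Ioc_union_Ioi_eq_Ioi ha,
    setIntegral_union Ioc_disjoint_Ioi_same measurableSet_Ioi
      (inner_pieces hlam hθ ha).1 (inner_pieces hlam hθ ha).2,
    ← setIntegral_congr_fun measurableSet_Ioc
      (fun b hb => by simp only [abs_of_nonneg (sub_nonneg.2 hb.2)] :
        EqOn (fun b => Real.exp (-(θ*b)) * (a - b) ^ lam)
          (fun b => Real.exp (-(θ*b)) * |a - b| ^ lam) (Ioc (0:ℝ) a)),
    ← setIntegral_congr_fun measurableSet_Ioi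
      (fun b hb => by simp only [abs_sub_comm a b, abs_of_nonneg (sub_nonneg.2 (le_of_lt (mem_Ioi.mp hb)))] :
        EqOn (fun b => Real.exp (-(θ*b)) * (b - a) ^ lam)
          (fun b => Real.exp (-(θ*b)) * |a - b| ^ lam) (Ioi a)),
    Ioc_val hlam hθ ha, Ioi_val hlam hθ a]
  ring

end inner

noncomputable def G (θ lam : ℝ) : ℝ → ℝ :=
  fun a => Real.exp (-(θ*a)) * (Real.exp (-(θ*a)) * (P θ lam a + K θ lam))

noncomputable def D (θ lam : ℝ) : ℝ → ℝ :=
  fun a => (1/(lam+1)) * (Real.exp (-(θ*a)) * a ^ (lam+1)) + K θ lam * Real.exp (-((2*θ)*a))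

lemma G_nonneg (hlam : -1 < lam) (hθ : 0 < θ) {a : ℝ} (ha : 0 ≤ a) : 0 ≤ G θ lam a :=
  mul_nonneg (Real.exp_nonneg _) (mul_nonneg (Real.exp_nonneg _)
    (add_nonneg (P_nonneg hlam hθ ha) (K_pos hlam hθ).le))

lemma G_le_D (hlam : -1 < lam) (hθ : 0 < θ) {a : ℝ} (ha : 0 ≤ a) : G θ lam a ≤ D θ lam a := by
  have e2 : Real.exp (-(θ*a)) * Real.exp (-(θ*a)) = Real.exp (-((2*θ)*a)) := by
    rw [← Real.exp_add]; ring_nf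
  have e3 : Real.exp (-((2*θ)*a)) * Real.exp (θ*a) = Real.exp (-(θ*a)) := by
    rw [← Real.exp_add]; ring_nf
  have h1 : G θ lam a = Real.exp (-((2*θ)*a)) * P θ lam a + Real.exp (-((2*θ)*a)) * K θ lam := by
    rw [G, ← mul_assoc, e2, mul_add]
  rw [h1, D]
  have h2 : Real.exp (-((2*θ)*a)) * P θ lam a
      ≤ Real.exp (-((2*θ)*a)) * (Real.exp (θ*a) * (a ^ (lam+1) / (lam+1))) :=
    mul_le_mul_of_nonneg_left (P_le hlam hθ ha) (Real.exp_nonneg _)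
  have h3 : Real.exp (-((2*θ)*a)) * (Real.exp (θ*a) * (a ^ (lam+1) / (lam+1)))
      = (1/(lam+1)) * (Real.exp (-(θ*a)) * a ^ (lam+1)) := by
    rw [← mul_assoc, e3]; ring
  nlinarith [h2, h3]

lemma D_int (hlam : -1 < lam) (hθ : 0 < θ) : IntegrableOn (D θ lam) (Ioi (0:ℝ)) :=
  (((base_int (show (-1:ℝ) < lam+1 by linarith) hθ).const_mul _).add
    ((exp_int (show (0:ℝ) < 2*θ by linarith)).const_mul _))

lemma hH_int (hlam : -1 < lam) (hθ : 0 < θ) :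
    Integrable (fun p : ℝ × ℝ => Real.exp (-(θ*p.1)) * (Real.exp (-(θ*p.2)) * |p.1 - p.2| ^ lam))
      ((volume.restrict (Ioi 0)).prod (volume.restrict (Ioi 0))) := by
  refine (integrable_prod_iff (H_meas θ lam).aestronglyMeasurable).2 ⟨?_, ?_⟩
  · filter_upwards [ae_restrict_mem measurableSet_Ioi] with a ha
    exact (inner_int hlam hθ (le_of_lt ha)).const_mul _
  · refine Integrable.mono' (D_int hlam hθ)
      ((H_meas θ lam).aestronglyMeasurable.norm.integral_prod_right') ?_
    filter_upwards [ae_restrict_mem measurableSet_Ioi] with a ha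
    have ha' : (0:ℝ) ≤ a := (le_of_lt ha)
    have h1 : (∫ b, ‖Real.exp (-(θ*a)) * (Real.exp (-(θ*b)) * |a - b| ^ lam)‖
        ∂(volume.restrict (Ioi 0))) = G θ lam a := by
      rw [show (fun b => ‖Real.exp (-(θ*a)) * (Real.exp (-(θ*b)) * |a - b| ^ lam)‖)
          = fun b => Real.exp (-(θ*a)) * (Real.exp (-(θ*b)) * |a - b| ^ lam) from
        funext fun b => norm_of_nonneg (by positivity),
        MeasureTheory.integral_const_mul, inner_val hlam hθ ha', G]
    rw [Real.norm_eq_abs, h1, abs_of_nonneg (G_nonneg hlam hθ ha')]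
    exact G_le_D hlam hθ ha'

end Stmt0

namespace Part2
open Stmt0
variable {lam θ : ℝ}

noncomputable def W (θ lam : ℝ) (a u : ℝ) : ℝ :=
  Set.indicator (Ioc (0:ℝ) a) (fun u => Real.exp (-((2*θ)*a)) * (Real.exp (θ*u) * u ^ lam)) u

lemma W_meas (θ lam : ℝ) : Measurable (Function.uncurry (W θ lam)) := by
  have hunc : Function.uncurry (W θ lam)
      = Set.indicator {p : ℝ×ℝ | 0 < p.2 ∧ p.2 ≤ p.1}
          (fun p => Real.exp (-((2*θ)*p.1)) * (Real.exp (θ*p.2) * p.2 ^ lam)) := by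
    funext p
    rcases p with ⟨a, u⟩
    simp [Function.uncurry, W, Set.indicator_apply, Set.mem_Ioc, Set.mem_setOf_eq]
  rw [hunc]
  refine Measurable.indicator ?_ ?_
  · exact ((measurable_fst.const_mul (2*θ)).neg.exp).mul
      (((measurable_snd.const_mul θ).exp).mul ((mrpow lam).comp measurable_snd))
  · exact (measurableSet_lt measurable_const measurable_snd).inter
      (measurableSet_le measurable_snd measurable_fst)

lemma W_nonneg (θ lam : ℝ) (hlam : -1 < lam) (a u : ℝ) : 0 ≤ W θ lam a u :=
  Set.indicator_nonneg (fun v hv => mul_nonneg (Real.exp_nonneg _)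
    (mul_nonneg (Real.exp_nonneg _) (Real.rpow_nonneg hv.1.le _))) u

lemma W_int_section (hlam : -1 < lam) (hθ : 0 < θ) {a : ℝ} (ha : 0 < a) :
    Integrable (W θ lam a) volume := by
  refine (integrable_indicator_iff measurableSet_Ioc).2 ?_
  exact (intervalIntegrable_iff_integrableOn_Ioc_of_le ha.le).1 ((eI hlam θ 0 a).const_mul _)

lemma W_integral (hlam : -1 < lam) (hθ : 0 < θ) {a : ℝ} (ha : 0 < a) :
    ∫ u, W θ lam a u = Real.exp (-((2*θ)*a)) * P θ lam a := by
  simp only [W]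
  rw [MeasureTheory.integral_indicator measurableSet_Ioc, MeasureTheory.integral_const_mul,
    ← intervalIntegral.integral_of_le ha.le, P]

lemma expP_le (hlam : -1 < lam) (hθ : 0 < θ) {a : ℝ} (ha : 0 ≤ a) :
    Real.exp (-((2*θ)*a)) * P θ lam a ≤ (1/(lam+1)) * (Real.exp (-(θ*a)) * a ^ (lam+1)) := by
  have e3 : Real.exp (-((2*θ)*a)) * Real.exp (θ*a) = Real.exp (-(θ*a)) := by
    rw [← Real.exp_add]; ring_nf
  calc Real.exp (-((2*θ)*a)) * P θ lam a
      ≤ Real.exp (-((2*θ)*a)) * (Real.exp (θ*a) * (a ^ (lam+1) / (lam+1))) :=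
        mul_le_mul_of_nonneg_left (P_le hlam hθ ha) (Real.exp_nonneg _)
    _ = (1/(lam+1)) * (Real.exp (-(θ*a)) * a ^ (lam+1)) := by rw [← mul_assoc, e3]; ring

lemma S1_val (hlam : -1 < lam) (hθ : 0 < θ) :
    ∫ a in Ioi (0:ℝ), Real.exp (-((2*θ)*a)) * P θ lam a = K θ lam * (1/(2*θ)) := by
  have h2θ : (0:ℝ) < 2*θ := by linarith
  rw [setIntegral_congr_fun measurableSet_Ioi
    (fun a (ha : a ∈ Ioi (0:ℝ)) => (W_integral hlam hθ ha).symm :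
      EqOn (fun a => Real.exp (-((2*θ)*a)) * P θ lam a) (fun a => ∫ u, W θ lam a u) (Ioi 0))]
  have hint : Integrable (Function.uncurry (W θ lam)) ((volume.restrict (Ioi 0)).prod volume) := by
    refine (integrable_prod_iff (W_meas θ lam).aestronglyMeasurable).2 ⟨?_, ?_⟩
    · filter_upwards [ae_restrict_mem measurableSet_Ioi] with a ha
      exact W_int_section hlam hθ ha
    · refine Integrable.mono'
        ((base_int (show (-1:ℝ) < lam+1 by linarith) hθ).const_mul (1/(lam+1)))
        ((W_meas θ lam).aestronglyMeasurable.norm.integral_prod_right') ?_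
      filter_upwards [ae_restrict_mem measurableSet_Ioi] with a ha
      simp only [Function.uncurry_apply_pair]
      have h1 : (∫ u, ‖W θ lam a u‖) = Real.exp (-((2*θ)*a)) * P θ lam a := by
        rw [show (fun u => ‖W θ lam a u‖) = W θ lam a from
          funext fun u => norm_of_nonneg (W_nonneg θ lam hlam a u), W_integral hlam hθ ha]
      rw [Real.norm_eq_abs, h1,
        abs_of_nonneg (mul_nonneg (Real.exp_nonneg _) (P_nonneg hlam hθ (le_of_lt ha)))]
      exact expP_le hlam hθ (le_of_lt ha)
  rw [MeasureTheory.integral_integral_swap hint]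
  have hFu : (fun u => ∫ a in Ioi (0:ℝ), W θ lam a u)
      = Set.indicator (Ioi (0:ℝ))
          (fun u => (Real.exp (θ*u) * u ^ lam) * (Real.exp (-((2*θ)*u)) / (2*θ))) := by
    funext u
    by_cases hu : 0 < u
    · rw [Set.indicator_of_mem (mem_Ioi.2 hu)]
      have hW : ∀ a, W θ lam a u
          = (Real.exp (θ*u) * u ^ lam)
            * Set.indicator (Ici u) (fun a => Real.exp (-((2*θ)*a))) a := by
        intro a
        simp only [W, Set.indicator_apply, Set.mem_Ioc, Set.mem_Ici]
        by_cases h : u ≤ a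
        · simp only [h, hu, and_self, if_true, true_and]; ring
        · simp [h, hu]
      have hii : Ioi (0:ℝ) ∩ Ici u = Ici u :=
        Set.inter_eq_self_of_subset_right (fun x hx => lt_of_lt_of_le hu hx)
      rw [setIntegral_congr_fun measurableSet_Ioi (fun a _ => hW a),
        MeasureTheory.integral_const_mul, setIntegral_indicator measurableSet_Ici,
        hii, MeasureTheory.integral_Ici_eq_integral_Ioi, expIoi_val h2θ u]
    · rw [Set.indicator_of_notMem (by simpa using hu)]
      have hW0 : ∀ a, W θ lam a u = 0 := fun a =>
        Set.indicator_of_notMem (fun hc => hu hc.1) _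
      simp [hW0]
  rw [hFu, MeasureTheory.integral_indicator measurableSet_Ioi]
  rw [show (∫ u in Ioi (0:ℝ), (Real.exp (θ*u) * u ^ lam) * (Real.exp (-((2*θ)*u)) / (2*θ)))
      = ∫ u in Ioi (0:ℝ), (1/(2*θ)) * (Real.exp (-(θ*u)) * u ^ lam) from
    setIntegral_congr_fun measurableSet_Ioi (fun u _ => by
      rw [show Real.exp (-(θ*u)) = Real.exp (θ*u) * Real.exp (-((2*θ)*u)) from by
        rw [← Real.exp_add]; ring_nf]
      ring),
    MeasureTheory.integral_const_mul, base_val hlam hθ, K]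
  ring

end Part2

namespace Part3
open Stmt0 Part2
variable {lam θ : ℝ}

lemma Lval (hlam : -1 < lam) (hθ : 0 < θ) :
    ∫ p in (Ioi (0:ℝ) ×ˢ Ioi (0:ℝ)),
        Real.exp (-(θ*p.1)) * (Real.exp (-(θ*p.2)) * |p.1 - p.2| ^ lam)
      = Real.Gamma (lam+1) / θ ^ (lam+2) := by
  have h2θ : (0:ℝ) < 2*θ := by linarith
  rw [MeasureTheory.Measure.volume_eq_prod,
    setIntegral_prod _ (by rw [IntegrableOn, ← Measure.prod_restrict]; exact hH_int hlam hθ)]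
  rw [show (∫ a in Ioi (0:ℝ), ∫ b in Ioi (0:ℝ),
        Real.exp (-(θ*a)) * (Real.exp (-(θ*b)) * |a - b| ^ lam))
      = ∫ a in Ioi (0:ℝ),
          (Real.exp (-((2*θ)*a)) * P θ lam a + K θ lam * Real.exp (-((2*θ)*a))) from
    setIntegral_congr_fun measurableSet_Ioi (fun a (ha : a ∈ Ioi (0:ℝ)) => by
      rw [MeasureTheory.integral_const_mul, inner_val hlam hθ (le_of_lt ha), ← mul_assoc,
        show Real.exp (-(θ*a)) * Real.exp (-(θ*a)) = Real.exp (-((2*θ)*a)) from by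
          rw [← Real.exp_add]; ring_nf]
      ring)]
  have i1 : IntegrableOn (fun a => Real.exp (-((2*θ)*a)) * P θ lam a) (Ioi (0:ℝ)) := by
    refine Integrable.mono'
      ((base_int (show (-1:ℝ) < lam+1 by linarith) hθ).const_mul (1/(lam+1)))
      (((Real.continuous_exp.comp ((continuous_const.mul continuous_id).neg)).mul
        (contP hlam θ)).aestronglyMeasurable) ?_
    filter_upwards [ae_restrict_mem measurableSet_Ioi] with a ha
    rw [Real.norm_eq_abs,
      abs_of_nonneg (mul_nonneg (Real.exp_nonneg _) (P_nonneg hlam hθ (le_of_lt ha)))]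
    exact expP_le hlam hθ (le_of_lt ha)
  have i2 : IntegrableOn (fun a => K θ lam * Real.exp (-((2*θ)*a))) (Ioi (0:ℝ)) :=
    (exp_int h2θ).const_mul _
  rw [MeasureTheory.integral_add i1 i2, S1_val hlam hθ, MeasureTheory.integral_const_mul,
    exp_val h2θ]
  have hθ0 : θ ≠ 0 := hθ.ne'
  have h1 : K θ lam * (1 / (2 * θ)) + K θ lam * (1 / (2 * θ)) = K θ lam * (1/θ) := by
    field_simp; ring
  have h2 : θ ^ (lam+2) = θ ^ (lam+1) * θ := by
    rw [show lam + 2 = (lam+1)+1 by ring, Real.rpow_add_one hθ0]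
  rw [h1, K, div_mul_div_comm, mul_one, ← h2]

noncomputable def A (θ lam : ℝ) (t : ℝ) : ℝ :=
  ∫ p in (Ioc (0:ℝ) t ×ˢ Ioc (0:ℝ) t),
    Real.exp (-(θ*p.1)) * (Real.exp (-(θ*p.2)) * |p.1 - p.2| ^ lam)

lemma sq_subset (t : ℝ) : (Ioc (0:ℝ) t ×ˢ Ioc (0:ℝ) t) ⊆ (Ioi (0:ℝ) ×ˢ Ioi (0:ℝ)) :=
  Set.prod_mono Ioc_subset_Ioi_self Ioc_subset_Ioi_self

lemma hfi_Q (hlam : -1 < lam) (hθ : 0 < θ) :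
    IntegrableOn (fun p : ℝ × ℝ => Real.exp (-(θ*p.1)) * (Real.exp (-(θ*p.2)) * |p.1 - p.2| ^ lam))
      (Ioi (0:ℝ) ×ˢ Ioi (0:ℝ)) (volume : Measure (ℝ×ℝ)) := by
  rw [MeasureTheory.Measure.volume_eq_prod, IntegrableOn, ← Measure.prod_restrict]
  exact hH_int hlam hθ

lemma A_mono (hlam : -1 < lam) (hθ : 0 < θ) : Monotone (A θ lam) := by
  intro s t hst
  refine setIntegral_mono_set ((hfi_Q hlam hθ).mono_set (sq_subset t)) ?_ ?_
  · exact ae_of_all _ (fun p => mul_nonneg (Real.exp_nonneg _)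
      (mul_nonneg (Real.exp_nonneg _) (Real.rpow_nonneg (abs_nonneg _) _)))
  · exact HasSubset.Subset.eventuallyLE
      (Set.prod_mono (Ioc_subset_Ioc_right hst) (Ioc_subset_Ioc_right hst))

lemma A_tendsto (hlam : -1 < lam) (hθ : 0 < θ) :
    Tendsto (A θ lam) atTop (nhds (Real.Gamma (lam+1) / θ ^ (lam+2))) := by
  have hsq_m : Monotone (fun n : ℕ => (Ioc (0:ℝ) n ×ˢ Ioc (0:ℝ) n : Set (ℝ×ℝ))) :=
    fun m n h => Set.prod_mono (Ioc_subset_Ioc_right (Nat.cast_le.2 h))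
      (Ioc_subset_Ioc_right (Nat.cast_le.2 h))
  have hsq_u : ⋃ n : ℕ, (Ioc (0:ℝ) n ×ˢ Ioc (0:ℝ) n : Set (ℝ×ℝ))
      = Ioi (0:ℝ) ×ˢ Ioi (0:ℝ) := by
    ext p
    simp only [Set.mem_iUnion, Set.mem_prod, Set.mem_Ioc, Set.mem_Ioi]
    constructor
    · rintro ⟨n, ⟨h1, _⟩, ⟨h2, _⟩⟩; exact ⟨h1, h2⟩
    · rintro ⟨h1, h2⟩
      obtain ⟨n, hn⟩ := exists_nat_ge (max p.1 p.2)
      exact ⟨n, ⟨h1, le_trans (le_max_left _ _) hn⟩, ⟨h2, le_trans (le_max_right _ _) hn⟩⟩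
  have hnat : Tendsto (fun n : ℕ => A θ lam n) atTop
      (nhds (Real.Gamma (lam+1) / θ ^ (lam+2))) := by
    have h := MeasureTheory.tendsto_setIntegral_of_monotone
      (s := fun n : ℕ => (Ioc (0:ℝ) n ×ˢ Ioc (0:ℝ) n : Set (ℝ×ℝ)))
      (fun n => measurableSet_Ioc.prod measurableSet_Ioc) hsq_m
      (by rw [hsq_u]; exact hfi_Q hlam hθ)
    rw [hsq_u, Lval hlam hθ] at h
    exact h
  refine tendsto_of_tendsto_of_tendsto_of_le_of_le'
    (hnat.comp tendsto_nat_floor_atTop) (hnat.comp tendsto_nat_ceil_atTop) ?_ ?_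
  · filter_upwards [eventually_ge_atTop (0:ℝ)] with t ht
    exact A_mono hlam hθ (Nat.floor_le ht)
  · filter_upwards [] with t
    exact A_mono hlam hθ (Nat.le_ceil t)

lemma step1 (hθ : 0 < θ) (t : ℝ) :
    Real.exp (-2*θ*t) * (∫ s in (0:ℝ)..t, ∫ r in (0:ℝ)..t,
        Real.exp (θ*s) * Real.exp (θ*r) * |s - r| ^ lam)
      = ∫ a in (0:ℝ)..t, ∫ b in (0:ℝ)..t,
          Real.exp (-(θ*a)) * (Real.exp (-(θ*b)) * |a - b| ^ lam) := by
  have houter := intervalIntegral.integral_comp_sub_left (a := 0) (b := t)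
    (fun s => ∫ r in (0:ℝ)..t, Real.exp (θ*s) * Real.exp (θ*r) * |s - r| ^ lam) t
  simp only [sub_self, sub_zero] at houter
  rw [← houter, ← intervalIntegral.integral_const_mul]
  refine intervalIntegral.integral_congr (fun a _ => ?_)
  have hinner := intervalIntegral.integral_comp_sub_left (a := 0) (b := t)
    (fun r => Real.exp (θ*(t-a)) * Real.exp (θ*r) * |t - a - r| ^ lam) t
  simp only [sub_self, sub_zero] at hinner
  rw [← hinner, ← intervalIntegral.integral_const_mul]
  refine intervalIntegral.integral_congr (fun b _ => ?_)
  have habs : t - a - (t - b) = -(a - b) := by ring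
  rw [habs, abs_neg]
  have key : Real.exp (-2*θ*t) * (Real.exp (θ*(t-a)) * Real.exp (θ*(t-b)))
      = Real.exp (-(θ*a)) * Real.exp (-(θ*b)) := by
    rw [← Real.exp_add, ← Real.exp_add, ← Real.exp_add]; congr 1; ring
  linear_combination |a - b| ^ lam * key

end Part3

open Stmt0 Part2 Part3 in
theorem stmt_0 (lam θ : ℝ) (hlam : -1 < lam) (hθ : 0 < θ) :
    Tendsto (fun t : ℝ =>
        Real.exp (-2 * θ * t) *
          ∫ s in (0:ℝ)..t, ∫ r in (0:ℝ)..t,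
            Real.exp (θ * s) * Real.exp (θ * r) * |s - r| ^ lam)
      atTop (nhds (Real.Gamma (lam + 1) / θ ^ (lam + 2))) := by
  refine Tendsto.congr' ?_ (A_tendsto hlam hθ)
  filter_upwards [eventually_ge_atTop (0:ℝ)] with t ht
  have hsq : IntegrableOn
      (fun p : ℝ × ℝ => Real.exp (-(θ*p.1)) * (Real.exp (-(θ*p.2)) * |p.1 - p.2| ^ lam))
      (Ioc (0:ℝ) t ×ˢ Ioc (0:ℝ) t) (volume : Measure (ℝ×ℝ)) :=
    (hfi_Q hlam hθ).mono_set (sq_subset t)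
  rw [MeasureTheory.Measure.volume_eq_prod] at hsq
  have e1 : A θ lam t = ∫ a in Ioc (0:ℝ) t, ∫ b in Ioc (0:ℝ) t,
      Real.exp (-(θ*a)) * (Real.exp (-(θ*b)) * |a - b| ^ lam) := by
    rw [A, MeasureTheory.Measure.volume_eq_prod, setIntegral_prod _ hsq]
  rw [e1, step1 hθ t, intervalIntegral.integral_of_le ht]
  refine setIntegral_congr_fun measurableSet_Ioc (fun a _ => ?_)
  rw [intervalIntegral.integral_of_le ht]
end

section
/- For any λ > -1 and θ > 0, one has the identity e^{-2θt} ∫₀ᵗ∫₀ᵗ e^{θs}e^{θr}|s-r|^λ dr ds = (1/θ)(∫₀ᵗ u^λ e^{-θu} du − e^{-2θt} ∫₀ᵗ u^λ e^{θu} du) for every t ≥ 0. -/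
open Real Filter intervalIntegral
open MeasureTheory

variable {lam θ : ℝ}

lemma aux_int (hlam : -1 < lam) (c a b : ℝ) :
    IntervalIntegrable (fun u => u ^ lam * Real.exp (c * u)) volume a b :=
  (intervalIntegrable_rpow' hlam).mul_continuousOn
    ((Real.continuous_exp.comp (continuous_const.mul continuous_id)).continuousOn)

lemma aux_abs (hlam : -1 < lam) (a b : ℝ) :
    IntervalIntegrable (fun x : ℝ => |x| ^ lam) volume a b := by
  have h0 : ∀ b : ℝ, 0 ≤ b → IntervalIntegrable (fun x : ℝ => |x| ^ lam) volume 0 b := by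
    intro b hb
    refine (intervalIntegrable_rpow' hlam (a := 0) (b := b)).congr ?_
    rw [Set.uIoc_of_le hb]
    intro x hx
    simp only [abs_of_pos hx.1]
  have h1 : ∀ b : ℝ, IntervalIntegrable (fun x : ℝ => |x| ^ lam) volume 0 b := by
    intro b
    rcases le_or_gt 0 b with hb | hb
    · exact h0 b hb
    · have key : IntervalIntegrable (fun x : ℝ => |(-x)| ^ lam) volume (-0) (-b) := by
        simpa [abs_neg] using h0 (-b) (by linarith)
      exact (IntervalIntegrable.iff_comp_neg (by simp)).mpr key
  exact (h1 a).symm.trans (h1 b)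

lemma aux_absint (hlam : -1 < lam) (s a b : ℝ) :
    IntervalIntegrable (fun r => Real.exp (θ * s) * Real.exp (θ * r) * |s - r| ^ lam)
      volume a b := by
  have h1 : IntervalIntegrable (fun r : ℝ => |s - r| ^ lam) volume a b := by
    have := (aux_abs hlam (s - a) (s - b)).comp_sub_left s
    simpa using this
  exact h1.continuousOn_mul
    ((Real.continuous_exp.comp (continuous_const.mul continuous_const)).mul
      (Real.continuous_exp.comp (continuous_const.mul continuous_id))).continuousOn

lemma aux_cont (hlam : -1 < lam) (c : ℝ) :
    Continuous (fun x => ∫ u in (0:ℝ)..x, u ^ lam * Real.exp (c * u)) :=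
  intervalIntegral.continuous_primitive (fun a b => aux_int hlam c a b) 0

lemma aux_ftc (hlam : -1 < lam) (c : ℝ) {x : ℝ} (hx : 0 < x) :
    HasDerivAt (fun y => ∫ u in (0:ℝ)..y, u ^ lam * Real.exp (c * u))
      (x ^ lam * Real.exp (c * x)) x := by
  refine intervalIntegral.integral_hasDerivAt_right (aux_int hlam c 0 x) ?_ ?_
  · have hm : Measurable (fun u : ℝ => u ^ lam * Real.exp (c * u)) := by
      fun_prop
    exact ⟨Set.univ, Filter.univ_mem, hm.aestronglyMeasurable⟩
  · exact ((Real.continuousAt_rpow_const x lam (Or.inl hx.ne')).mul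
      (Real.continuous_exp.comp (continuous_const.mul continuous_id)).continuousAt)

lemma aux_ibp (hlam : -1 < lam) (c d : ℝ) (hd : d ≠ 0) (t : ℝ) (ht : 0 ≤ t) :
    ∫ s in (0:ℝ)..t, Real.exp (d * s) * ∫ u in (0:ℝ)..s, u ^ lam * Real.exp (c * u)
      = (1 / d) * (Real.exp (d * t) * (∫ u in (0:ℝ)..t, u ^ lam * Real.exp (c * u))
          - ∫ s in (0:ℝ)..t, s ^ lam * Real.exp ((c + d) * s)) := by
  set A : ℝ → ℝ := fun x => ∫ u in (0:ℝ)..x, u ^ lam * Real.exp (c * u) with hA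
  have hcontA : Continuous A := aux_cont hlam c
  have hf : ∀ x ∈ Set.Ioo (0:ℝ) t, HasDerivWithinAt (fun s => Real.exp (d * s) * A s)
      (d * (Real.exp (d * x) * A x) + x ^ lam * Real.exp ((c + d) * x)) (Set.Ioi x) x := by
    intro x hx
    have h1 : HasDerivAt (fun s : ℝ => Real.exp (d * s)) (d * Real.exp (d * x)) x := by
      simpa [mul_comm] using ((hasDerivAt_id x).const_mul d).exp
    have h2 := (h1.mul (aux_ftc hlam c hx.1)).hasDerivWithinAt (s := Set.Ioi x)
    refine h2.congr_deriv ?_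
    rw [add_mul, Real.exp_add]
    simp only [hA]
    ring
  have hcont1 : Continuous (fun x : ℝ => d * (Real.exp (d * x) * A x)) := by
    fun_prop
  have hcont2 : Continuous (fun x : ℝ => Real.exp (d * x) * A x) := by
    fun_prop
  have hint : IntervalIntegrable
      (fun x => d * (Real.exp (d * x) * A x) + x ^ lam * Real.exp ((c + d) * x)) volume 0 t :=
    (hcont1.intervalIntegrable 0 t).add (aux_int hlam (c + d) 0 t)
  have key := intervalIntegral.integral_eq_sub_of_hasDeriv_right_of_le ht
    hcont2.continuousOn hf hint
  have hA0 : A 0 = 0 := intervalIntegral.integral_same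
  rw [intervalIntegral.integral_add (hcont1.intervalIntegrable 0 t)
      (aux_int hlam (c + d) 0 t),
    intervalIntegral.integral_const_mul] at key
  have : d * ∫ s in (0:ℝ)..t, Real.exp (d * s) * A s
      = Real.exp (d * t) * A t - ∫ s in (0:ℝ)..t, s ^ lam * Real.exp ((c + d) * s) := by
    rw [hA0] at key
    linarith [key]
  field_simp
  linarith [this]

lemma aux_inner (hlam : -1 < lam) (t s : ℝ) (hs0 : 0 ≤ s) (hst : s ≤ t) :
    ∫ r in (0:ℝ)..t, Real.exp (θ * s) * Real.exp (θ * r) * |s - r| ^ lam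
      = Real.exp (2 * θ * s) * ((∫ u in (0:ℝ)..s, u ^ lam * Real.exp (-θ * u))
          + ∫ u in (0:ℝ)..(t - s), u ^ lam * Real.exp (θ * u)) := by
  have hsplit := intervalIntegral.integral_add_adjacent_intervals
    (aux_absint (θ := θ) hlam s 0 s) (aux_absint (θ := θ) hlam s s t)
  have P1 : ∫ r in (0:ℝ)..s, Real.exp (θ * s) * Real.exp (θ * r) * |s - r| ^ lam
      = Real.exp (2 * θ * s) * ∫ u in (0:ℝ)..s, u ^ lam * Real.exp (-θ * u) := by
    have heq : (fun r => Real.exp (θ * s) * Real.exp (θ * r) * |s - r| ^ lam)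
        = fun r => (fun u => Real.exp (2 * θ * s) * (|u| ^ lam * Real.exp (-θ * u))) (s - r) := by
      funext r
      have h : Real.exp (2 * θ * s) * Real.exp (-θ * (s - r))
          = Real.exp (θ * s) * Real.exp (θ * r) := by
        rw [← Real.exp_add, ← Real.exp_add]; ring_nf
      simp only
      rw [← h]; ring
    rw [heq, intervalIntegral.integral_comp_sub_left
      (fun u => Real.exp (2 * θ * s) * (|u| ^ lam * Real.exp (-θ * u))) s, sub_self, sub_zero,
      intervalIntegral.integral_const_mul]
    congr 1
    apply intervalIntegral.integral_congr
    intro u hu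
    rw [Set.uIcc_of_le hs0] at hu
    simp only [abs_of_nonneg hu.1]
  have P2 : ∫ r in s..t, Real.exp (θ * s) * Real.exp (θ * r) * |s - r| ^ lam
      = Real.exp (2 * θ * s) * ∫ u in (0:ℝ)..(t - s), u ^ lam * Real.exp (θ * u) := by
    have heq : (fun r => Real.exp (θ * s) * Real.exp (θ * r) * |s - r| ^ lam)
        = fun r => (fun u => Real.exp (2 * θ * s) * (|u| ^ lam * Real.exp (θ * u))) (r - s) := by
      funext r
      have h : Real.exp (2 * θ * s) * Real.exp (θ * (r - s))
          = Real.exp (θ * s) * Real.exp (θ * r) := by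
        rw [← Real.exp_add, ← Real.exp_add]; ring_nf
      simp only
      rw [abs_sub_comm, ← h]; ring
    rw [heq, intervalIntegral.integral_comp_sub_right
      (fun u => Real.exp (2 * θ * s) * (|u| ^ lam * Real.exp (θ * u))) s, sub_self,
      intervalIntegral.integral_const_mul]
    congr 1
    apply intervalIntegral.integral_congr
    intro u hu
    rw [Set.uIcc_of_le (by linarith : (0:ℝ) ≤ t - s)] at hu
    simp only [abs_of_nonneg hu.1]
  rw [← hsplit, P1, P2, mul_add]

theorem stmt_2 (lam θ : ℝ) (hlam : -1 < lam) (hθ : 0 < θ) (t : ℝ) (ht : 0 ≤ t) :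
    Real.exp (-2 * θ * t) *
        ∫ s in (0:ℝ)..t, ∫ r in (0:ℝ)..t,
          Real.exp (θ * s) * Real.exp (θ * r) * |s - r| ^ lam
      = (1 / θ) *
        ((∫ u in (0:ℝ)..t, u ^ lam * Real.exp (-θ * u)) -
          Real.exp (-2 * θ * t) * ∫ u in (0:ℝ)..t, u ^ lam * Real.exp (θ * u)) := by
  have hc1 : Continuous (fun s : ℝ =>
      Real.exp (2 * θ * s) * ∫ u in (0:ℝ)..s, u ^ lam * Real.exp (-θ * u)) :=
    Continuous.mul (by fun_prop) (aux_cont hlam (-θ))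
  have hc2 : Continuous (fun s : ℝ =>
      Real.exp (2 * θ * s) * ∫ u in (0:ℝ)..(t - s), u ^ lam * Real.exp (θ * u)) :=
    Continuous.mul (by fun_prop) ((aux_cont hlam θ).comp (continuous_const.sub continuous_id))
  have hΦ1 : (∫ s in (0:ℝ)..t, ∫ r in (0:ℝ)..t,
        Real.exp (θ * s) * Real.exp (θ * r) * |s - r| ^ lam)
      = ∫ s in (0:ℝ)..t,
          (Real.exp (2 * θ * s) * (∫ u in (0:ℝ)..s, u ^ lam * Real.exp (-θ * u))
            + Real.exp (2 * θ * s) * ∫ u in (0:ℝ)..(t - s), u ^ lam * Real.exp (θ * u)) := by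
    apply intervalIntegral.integral_congr
    intro s hs
    rw [Set.uIcc_of_le ht] at hs
    simp only
    rw [aux_inner hlam t s hs.1 hs.2, mul_add]
  have hsum := intervalIntegral.integral_add
    (hc1.intervalIntegrable (μ := volume) 0 t) (hc2.intervalIntegrable (μ := volume) 0 t)
  -- first piece via IBP
  have T1 := aux_ibp hlam (-θ) (2 * θ) (by positivity) t ht
  have e1 : -θ + 2 * θ = θ := by ring
  rw [e1] at T1
  -- second piece: reflect then IBP
  have hW : (fun s : ℝ =>
        Real.exp (2 * θ * s) * ∫ u in (0:ℝ)..(t - s), u ^ lam * Real.exp (θ * u))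
      = fun s => (fun v => Real.exp (2 * θ * t) *
          (Real.exp (-2 * θ * v) * ∫ u in (0:ℝ)..v, u ^ lam * Real.exp (θ * u))) (t - s) := by
    funext s
    simp only
    have h : Real.exp (2 * θ * t) * Real.exp (-2 * θ * (t - s)) = Real.exp (2 * θ * s) := by
      rw [← Real.exp_add]; ring_nf
    rw [← h]; ring
  have T2 := aux_ibp hlam θ (-2 * θ) (by nlinarith) t ht
  have e2 : θ + -2 * θ = -θ := by ring
  rw [e2] at T2
  have hT2 : (∫ s in (0:ℝ)..t,
        Real.exp (2 * θ * s) * ∫ u in (0:ℝ)..(t - s), u ^ lam * Real.exp (θ * u))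
      = Real.exp (2 * θ * t) * ∫ v in (0:ℝ)..t,
          Real.exp (-2 * θ * v) * ∫ u in (0:ℝ)..v, u ^ lam * Real.exp (θ * u) := by
    rw [hW, intervalIntegral.integral_comp_sub_left
      (fun v => Real.exp (2 * θ * t) *
        (Real.exp (-2 * θ * v) * ∫ u in (0:ℝ)..v, u ^ lam * Real.exp (θ * u))) t,
      sub_self, sub_zero, intervalIntegral.integral_const_mul]
  rw [hΦ1, hsum, T1, hT2, T2]
  have hEE : Real.exp (-2 * θ * t) * Real.exp (2 * θ * t) = 1 := by
    rw [← Real.exp_add]; norm_num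
  set a := ∫ u in (0:ℝ)..t, u ^ lam * Real.exp (-θ * u) with ha
  set b := ∫ u in (0:ℝ)..t, u ^ lam * Real.exp (θ * u) with hb
  linear_combination ((2 * a - Real.exp (-2 * θ * t) * b) / (2 * θ)) * hEE
end

section
/- Let f, g : [0,T] → ℝ with f α-Hölder continuous and g β-Hölder continuous where α + β > 1. Then for all t ∈ [0,T], the Young integrals satisfy the integration by parts formula f(t)g(t) = f(0)g(0) + ∫₀ᵗ g(u) df(u) + ∫₀ᵗ f(u) dg(u). -/
open Real Filter

/-- Riemann–Stieltjes sum of `∫₀ᵗ f dg` over the uniform partition of `[0,t]` with `n` pieces. -/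
noncomputable def RSsum (f g : ℝ → ℝ) (t : ℝ) (n : ℕ) : ℝ :=
  ∑ i ∈ Finset.range n, f (t * i / n) * (g (t * (i + 1) / n) - g (t * i / n))

lemma sum_range_mul' (F : ℕ → ℝ) (n m : ℕ) :
    ∑ l ∈ Finset.range (n * m), F l
      = ∑ i ∈ Finset.range n, ∑ j ∈ Finset.range m, F (i * m + j) := by
  induction n with
  | zero => simp
  | succ n ih =>
    rw [Nat.succ_mul, Finset.sum_range_add, ih, Finset.sum_range_succ]

lemma phi_le (θ : ℝ) (hθ : 1 ≤ θ) (x : ℝ) (hx : x ∈ Set.Icc (1/3 : ℝ) (2/3)) :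
    x ^ θ + (1 - x) ^ θ ≤ (1/3 : ℝ) ^ θ + (2/3 : ℝ) ^ θ := by
  have hco := convexOn_rpow hθ
  have hconv1 : ConvexOn ℝ (Set.Icc (0:ℝ) 1) (fun y : ℝ => y ^ θ) :=
    hco.subset (fun y hy => hy.1) (convex_Icc 0 1)
  have hconv2 : ConvexOn ℝ (Set.Icc (0:ℝ) 1) (fun y : ℝ => (1 - y) ^ θ) := by
    refine ⟨convex_Icc 0 1, ?_⟩
    intro a ha b hb s t hs ht hst
    simp only [smul_eq_mul]
    have h1 : 1 - (s * a + t * b) = s * (1 - a) + t * (1 - b) := by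
      have : s + t = 1 := hst
      nlinarith
    rw [h1]
    have := hco.2 (x := 1 - a) (y := 1 - b)
      (by simp only [Set.mem_Ici]; linarith [ha.2]) (by simp only [Set.mem_Ici]; linarith [hb.2])
      hs ht hst
    simpa [smul_eq_mul] using this
  have hconv := hconv1.add hconv2
  have hseg : x ∈ segment ℝ (1/3 : ℝ) (2/3) := by
    rw [segment_eq_Icc (by norm_num : (1/3:ℝ) ≤ 2/3)]; exact hx
  have h := hconv.le_on_segment (x := 1/3) (y := 2/3)
    (by constructor <;> norm_num) (by constructor <;> norm_num) hseg
  have he : ((1:ℝ) - 1/3) = 2/3 := by norm_num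
  have he2 : ((1:ℝ) - 2/3) = 1/3 := by norm_num
  simp only [Pi.add_apply, he, he2] at h
  calc x ^ θ + (1 - x) ^ θ
      ≤ ((1/3:ℝ) ^ θ + (2/3:ℝ) ^ θ) ⊔ ((2/3:ℝ) ^ θ + (1/3:ℝ) ^ θ) := h
    _ = (1/3 : ℝ) ^ θ + (2/3 : ℝ) ^ θ := by rw [add_comm ((2/3:ℝ) ^ θ)]; exact max_self _

lemma split_bound (θ : ℝ) (hθ : 1 ≤ θ) (p q : ℝ) (hq : 0 ≤ q) (hqp : q ≤ p) (hp2 : p ≤ 2 * q) :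
    p ^ θ + q ^ θ ≤ ((1/3 : ℝ) ^ θ + (2/3 : ℝ) ^ θ) * (p + q) ^ θ := by
  rcases eq_or_lt_of_le (by linarith : (0:ℝ) ≤ p + q) with hs | hs
  · have hp0 : p = 0 := by linarith
    have hq0 : q = 0 := by linarith
    have hθ0 : θ ≠ 0 := by linarith
    simp [hp0, hq0, Real.zero_rpow hθ0]
  · have hp : 0 ≤ p := by linarith
    have hxmem : p / (p + q) ∈ Set.Icc (1/3 : ℝ) (2/3) := by
      constructor
      · rw [le_div_iff₀ hs]; linarith
      · rw [div_le_iff₀ hs]; linarith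
    have key := phi_le θ hθ (p / (p + q)) hxmem
    have h1 : 1 - p / (p + q) = q / (p + q) := by field_simp; ring
    rw [h1] at key
    have hps : p = (p / (p + q)) * (p + q) := by field_simp
    have hqs : q = (q / (p + q)) * (p + q) := by field_simp
    calc p ^ θ + q ^ θ
        = ((p / (p+q)) ^ θ + (q / (p+q)) ^ θ) * (p + q) ^ θ := by
          rw [add_mul, ← Real.mul_rpow (by positivity) hs.le,
            ← Real.mul_rpow (by positivity) hs.le, ← hps, ← hqs]
      _ ≤ ((1/3 : ℝ) ^ θ + (2/3 : ℝ) ^ θ) * (p + q) ^ θ :=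
          mul_le_mul_of_nonneg_right key (Real.rpow_nonneg hs.le θ)

lemma young_key (f g : ℝ → ℝ) (T θ C A r : ℝ) (hθ0 : 0 < θ) (hC : 0 ≤ C) (hA0 : 0 ≤ A)
    (hAr : A * r + C ≤ A) (hr0 : 0 ≤ r)
    (hsplit : ∀ p q : ℝ, 0 ≤ q → q ≤ p → p ≤ 2 * q → p ^ θ + q ^ θ ≤ r * (p + q) ^ θ)
    (hfg : ∀ u v w : ℝ, 0 ≤ u → u ≤ v → v ≤ w → w ≤ T →
      |(f v - f u) * (g w - g v)| ≤ C * (w - u) ^ θ) :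
    ∀ k : ℕ, ∀ u h : ℝ, 0 ≤ u → 0 ≤ h → u + k * h ≤ T →
      |(∑ i ∈ Finset.range k, f (u + i * h) * (g (u + (i + 1) * h) - g (u + i * h)))
        - f u * (g (u + k * h) - g u)| ≤ A * ((k : ℝ) * h) ^ θ := by
  intro k
  induction k using Nat.strong_induction_on with
  | _ k IH =>
    match k with
    | 0 =>
      intro u h hu hh hT'
      simp only [Finset.range_zero, Finset.sum_empty, Nat.cast_zero, zero_mul, add_zero,
        sub_self, mul_zero, zero_sub, abs_neg, abs_zero]
      positivity
    | 1 =>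
      intro u h hu hh hT'
      have : (∑ i ∈ Finset.range 1, f (u + i * h) * (g (u + (i + 1) * h) - g (u + i * h)))
          - f u * (g (u + (1:ℕ) * h) - g u) = 0 := by
        simp [Finset.sum_range_one]
      rw [this, abs_zero]
      positivity
    | (k' + 2) =>
      intro u h hu hh hT'
      set K := k' + 2 with hK
      set p := K - K / 2 with hp
      set q := K / 2 with hq
      have hpq : p + q = K := by omega
      have hq1 : 1 ≤ q := by omega
      have hqp : q ≤ p := by omega
      have hp2q : p ≤ 2 * q := by omega
      have hpK : p < K := by omega
      have hqK : q < K := by omega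
      have hpqR : (p : ℝ) + (q : ℝ) = (K : ℝ) := by exact_mod_cast congrArg (Nat.cast (R := ℝ)) hpq
      have hKh : u + (K:ℝ) * h ≤ T := hT'
      have hphK : (p:ℝ) * h ≤ (K:ℝ) * h := by
        apply mul_le_mul_of_nonneg_right _ hh
        exact_mod_cast hpK.le
      have hph0 : 0 ≤ (p:ℝ) * h := by positivity
      have hqh0 : 0 ≤ (q:ℝ) * h := by positivity
      set u' := u + (p:ℝ) * h with hu'
      have hu'0 : 0 ≤ u' := by positivity
      have huq : u' + (q:ℝ) * h = u + (K:ℝ) * h := by rw [hu', ← hpqR]; ring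
      -- split the sum
      have hsum : (∑ i ∈ Finset.range K, f (u + i * h) * (g (u + (i + 1) * h) - g (u + i * h)))
          = (∑ i ∈ Finset.range p, f (u + i * h) * (g (u + (i + 1) * h) - g (u + i * h)))
            + ∑ j ∈ Finset.range q,
                f (u' + j * h) * (g (u' + (j + 1) * h) - g (u' + j * h)) := by
        have h0 := Finset.sum_range_add
          (fun i : ℕ => f (u + i * h) * (g (u + (i + 1) * h) - g (u + i * h))) p q
        rw [hpq] at h0
        rw [h0]
        congr 1
        refine Finset.sum_congr rfl fun j _ => ?_
        have e1 : u + ((p + j : ℕ) : ℝ) * h = u' + (j:ℝ) * h := by push_cast; rw [hu']; ring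
        have e2 : u + (((p + j : ℕ) : ℝ) + 1) * h = u' + ((j:ℝ) + 1) * h := by
          push_cast; rw [hu']; ring
        rw [e1, e2]
      have e1 := IH p hpK u h hu hh (by linarith)
      have e2 := IH q hqK u' h hu'0 hh (by rw [huq]; exact hKh)
      rw [huq] at e2
      have e3 : |(f u' - f u) * (g (u + (K:ℝ) * h) - g u')| ≤ C * ((K:ℝ) * h) ^ θ := by
        have h3 := hfg u u' (u + (K:ℝ) * h) hu (by rw [hu']; linarith)
          (by rw [hu']; linarith [hphK]) hKh
        have harg : u + (K:ℝ) * h - u = (K:ℝ) * h := by ring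
        rwa [harg] at h3
      -- combine
      have hdec : (∑ i ∈ Finset.range K, f (u + i * h) * (g (u + (i + 1) * h) - g (u + i * h)))
            - f u * (g (u + (K:ℝ) * h) - g u)
          = ((∑ i ∈ Finset.range p, f (u + i * h) * (g (u + (i + 1) * h) - g (u + i * h)))
              - f u * (g (u + (p:ℝ) * h) - g u))
            + ((∑ j ∈ Finset.range q,
                  f (u' + j * h) * (g (u' + (j + 1) * h) - g (u' + j * h)))
              - f u' * (g (u + (K:ℝ) * h) - g u'))
            + (f u' - f u) * (g (u + (K:ℝ) * h) - g u') := by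
        rw [hsum, hu']; ring
      rw [hdec]
      have habs : |((∑ i ∈ Finset.range p, f (u + i * h) * (g (u + (i + 1) * h) - g (u + i * h)))
              - f u * (g (u + (p:ℝ) * h) - g u))
            + ((∑ j ∈ Finset.range q,
                  f (u' + j * h) * (g (u' + (j + 1) * h) - g (u' + j * h)))
              - f u' * (g (u + (K:ℝ) * h) - g u'))
            + (f u' - f u) * (g (u + (K:ℝ) * h) - g u')|
          ≤ A * ((p:ℝ) * h) ^ θ + A * ((q:ℝ) * h) ^ θ + C * ((K:ℝ) * h) ^ θ := by
        refine (abs_add_le _ _).trans ?_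
        gcongr
        refine (abs_add_le _ _).trans ?_
        gcongr
      refine habs.trans ?_
      have hsplit' : ((p:ℝ)) ^ θ + ((q:ℝ)) ^ θ ≤ r * ((K:ℝ)) ^ θ := by
        have := hsplit (p:ℝ) (q:ℝ) (by positivity) (by exact_mod_cast hqp)
          (by exact_mod_cast hp2q)
        rwa [hpqR] at this
      have hKn : (0:ℝ) ≤ (K:ℝ) := by positivity
      rw [Real.mul_rpow (by positivity) hh, Real.mul_rpow (by positivity) hh,
        Real.mul_rpow hKn hh]
      have hhθ : (0:ℝ) ≤ h ^ θ := Real.rpow_nonneg hh θ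
      have hKθ : (0:ℝ) ≤ (K:ℝ) ^ θ := Real.rpow_nonneg hKn θ
      calc A * ((p:ℝ) ^ θ * h ^ θ) + A * ((q:ℝ) ^ θ * h ^ θ) + C * ((K:ℝ) ^ θ * h ^ θ)
          = (A * ((p:ℝ) ^ θ + (q:ℝ) ^ θ) + C * (K:ℝ) ^ θ) * h ^ θ := by ring
        _ ≤ (A * (r * (K:ℝ) ^ θ) + C * (K:ℝ) ^ θ) * h ^ θ := by
            apply mul_le_mul_of_nonneg_right _ hhθ
            have := mul_le_mul_of_nonneg_left hsplit' hA0
            linarith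
        _ = ((A * r + C) * (K:ℝ) ^ θ) * h ^ θ := by ring
        _ ≤ (A * (K:ℝ) ^ θ) * h ^ θ := by
            apply mul_le_mul_of_nonneg_right _ hhθ
            exact mul_le_mul_of_nonneg_right hAr hKθ
        _ = A * ((K:ℝ) ^ θ * h ^ θ) := by ring

lemma holderOn_abs_le {C r : NNReal} {f : ℝ → ℝ} {s : Set ℝ} (hf : HolderOnWith C r f s)
    {x y : ℝ} (hx : x ∈ s) (hy : y ∈ s) : |f x - f y| ≤ (C : ℝ) * |x - y| ^ (r : ℝ) := by
  have h := hf.edist_le hx hy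
  rw [edist_dist, edist_dist, Real.dist_eq, Real.dist_eq,
    ENNReal.ofReal_rpow_of_nonneg (abs_nonneg _) r.coe_nonneg] at h
  rw [show (C : ENNReal) = ENNReal.ofReal (C : ℝ) by simp,
    ← ENNReal.ofReal_mul C.coe_nonneg] at h
  exact (ENNReal.ofReal_le_ofReal_iff (by positivity)).mp h

lemma holder_cross (f g : ℝ → ℝ) (T : ℝ) (α β Cf Cg : NNReal)
    (hab : (α : ℝ) + (β : ℝ) ≠ 0)
    (hf : HolderOnWith Cf α f (Set.Icc 0 T)) (hg : HolderOnWith Cg β g (Set.Icc 0 T)) :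
    ∀ u v w : ℝ, 0 ≤ u → u ≤ v → v ≤ w → w ≤ T →
      |(f v - f u) * (g w - g v)| ≤ ((Cf : ℝ) * Cg) * (w - u) ^ ((α : ℝ) + β) := by
  intro u v w hu huv hvw hwT
  have hu' : u ∈ Set.Icc (0:ℝ) T := ⟨hu, by linarith⟩
  have hv' : v ∈ Set.Icc (0:ℝ) T := ⟨by linarith, by linarith⟩
  have hw' : w ∈ Set.Icc (0:ℝ) T := ⟨by linarith, by linarith⟩
  have h1 : |f v - f u| ≤ (Cf : ℝ) * (w - u) ^ (α : ℝ) := by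
    refine (holderOn_abs_le hf hv' hu').trans
      (mul_le_mul_of_nonneg_left ?_ Cf.coe_nonneg)
    rw [abs_of_nonneg (by linarith : (0:ℝ) ≤ v - u)]
    exact Real.rpow_le_rpow (by linarith) (by linarith) α.coe_nonneg
  have h2 : |g w - g v| ≤ (Cg : ℝ) * (w - u) ^ (β : ℝ) := by
    refine (holderOn_abs_le hg hw' hv').trans
      (mul_le_mul_of_nonneg_left ?_ Cg.coe_nonneg)
    rw [abs_of_nonneg (by linarith : (0:ℝ) ≤ w - v)]
    exact Real.rpow_le_rpow (by linarith) (by linarith) β.coe_nonneg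
  rw [abs_mul]
  calc |f v - f u| * |g w - g v|
      ≤ ((Cf : ℝ) * (w - u) ^ (α : ℝ)) * ((Cg : ℝ) * (w - u) ^ (β : ℝ)) :=
        mul_le_mul h1 h2 (abs_nonneg _) (mul_nonneg Cf.coe_nonneg (Real.rpow_nonneg (by linarith) _))
    _ = ((Cf : ℝ) * Cg) * ((w - u) ^ (α : ℝ) * (w - u) ^ (β : ℝ)) := by ring
    _ = ((Cf : ℝ) * Cg) * (w - u) ^ ((α : ℝ) + β) := by
        rw [Real.rpow_add' (by linarith : (0:ℝ) ≤ w - u) hab]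

lemma coarsen (f g : ℝ → ℝ) (T θ C A r t : ℝ) (hθ0 : 0 < θ) (hC : 0 ≤ C) (hA0 : 0 ≤ A)
    (hAr : A * r + C ≤ A) (hr0 : 0 ≤ r)
    (hsplit : ∀ p q : ℝ, 0 ≤ q → q ≤ p → p ≤ 2 * q → p ^ θ + q ^ θ ≤ r * (p + q) ^ θ)
    (hfg : ∀ u v w : ℝ, 0 ≤ u → u ≤ v → v ≤ w → w ≤ T →
      |(f v - f u) * (g w - g v)| ≤ C * (w - u) ^ θ)
    (ht : t ∈ Set.Icc (0:ℝ) T) (n m : ℕ) (hn : 1 ≤ n) (hm : 1 ≤ m) :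
    |RSsum f g t (n * m) - RSsum f g t n| ≤ (n : ℝ) * (A * (t / n) ^ θ) := by
  have key := young_key f g T θ C A r hθ0 hC hA0 hAr hr0 hsplit hfg
  have hn0 : (0:ℝ) < n := by exact_mod_cast hn
  have hm0 : (0:ℝ) < m := by exact_mod_cast hm
  have ht0 : 0 ≤ t := ht.1
  set h := t / ((n : ℝ) * m) with hdef
  have hh0 : 0 ≤ h := by positivity
  have hmh : (m : ℝ) * h = t / n := by rw [hdef]; field_simp
  have hre : RSsum f g t (n * m) = ∑ i ∈ Finset.range n, ∑ j ∈ Finset.range m,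
      f (t * i / n + j * h) * (g (t * i / n + (j + 1) * h) - g (t * i / n + j * h)) := by
    rw [RSsum, sum_range_mul']
    refine Finset.sum_congr rfl fun i _ => Finset.sum_congr rfl fun j _ => ?_
    have e1 : t * ((i * m + j : ℕ) : ℝ) / ((n * m : ℕ) : ℝ) = t * i / n + j * h := by
      rw [hdef]; push_cast; field_simp
    have e2 : t * (((i * m + j : ℕ) : ℝ) + 1) / ((n * m : ℕ) : ℝ)
        = t * i / n + ((j : ℝ) + 1) * h := by
      rw [hdef]; push_cast; field_simp; ring
    rw [e1, e2]
  have hco : RSsum f g t n = ∑ i ∈ Finset.range n,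
      f (t * i / n) * (g (t * i / n + m * h) - g (t * i / n)) := by
    rw [RSsum]
    refine Finset.sum_congr rfl fun i _ => ?_
    have e3 : t * ((i : ℝ) + 1) / n = t * i / n + (m : ℝ) * h := by
      rw [hmh]; field_simp
    rw [e3]
  rw [hre, hco, ← Finset.sum_sub_distrib]
  refine (Finset.abs_sum_le_sum_abs _ _).trans ?_
  have hbound : ∀ i ∈ Finset.range n,
      |(∑ j ∈ Finset.range m,
          f (t * i / n + j * h) * (g (t * i / n + (j + 1) * h) - g (t * i / n + j * h)))
        - f (t * i / n) * (g (t * i / n + m * h) - g (t * i / n))|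
      ≤ A * (t / n) ^ θ := by
    intro i hi
    have hin : (i : ℝ) + 1 ≤ n := by
      have := Finset.mem_range.mp hi
      exact_mod_cast Nat.succ_le_of_lt this
    have hu0 : 0 ≤ t * i / n := by positivity
    have hub : t * i / n + (m : ℝ) * h ≤ T := by
      rw [hmh]
      have e4 : t * i / n + t / n = t * ((i : ℝ) + 1) / n := by field_simp
      rw [e4]
      have : t * ((i : ℝ) + 1) / n ≤ t := by
        rw [div_le_iff₀ hn0]
        nlinarith
      linarith [ht.2]
    have := key m (t * i / n) h hu0 hh0 hub
    rw [hmh] at this ⊢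
    exact this
  refine (Finset.sum_le_sum hbound).trans ?_
  rw [Finset.sum_const, Finset.card_range, nsmul_eq_mul]

lemma bound_tendsto (t θ K : ℝ) (ht : 0 ≤ t) (hθ : 1 < θ) :
    Tendsto (fun n : ℕ => (n : ℝ) * (K * (t / n) ^ θ)) atTop (nhds 0) := by
  have h2 := (tendsto_rpow_neg_atTop (by linarith : 0 < θ - 1)).comp
    (tendsto_natCast_atTop_atTop (R := ℝ))
  have h1 : Tendsto (fun n : ℕ => (K * t ^ θ) * ((n : ℝ) ^ (-(θ - 1)))) atTop (nhds 0) := by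
    have := h2.const_mul (K * t ^ θ)
    simpa using this
  refine h1.congr' ?_
  filter_upwards [eventually_ge_atTop 1] with n hn
  have hn0 : (0:ℝ) < n := by exact_mod_cast hn
  have hnθ : ((n:ℝ)) ^ θ ≠ 0 := ne_of_gt (Real.rpow_pos_of_pos hn0 θ)
  rw [Real.div_rpow ht hn0.le, show -(θ - 1) = 1 - θ by ring, Real.rpow_sub hn0,
    Real.rpow_one]
  field_simp

lemma exists_limit (S : ℕ → ℝ) (b : ℕ → ℝ)
    (hb : Tendsto b atTop (nhds 0))
    (hS : ∀ n m : ℕ, 1 ≤ n → 1 ≤ m → |S (n * m) - S n| ≤ b n) :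
    ∃ I, Tendsto S atTop (nhds I) := by
  apply cauchySeq_tendsto_of_complete
  rw [Metric.cauchySeq_iff']
  intro ε hε
  have hev := hb.eventually_lt_const (by linarith : (0:ℝ) < ε / 2)
  rw [eventually_atTop] at hev
  obtain ⟨N₀, hN₀⟩ := hev
  refine ⟨max N₀ 1, fun n hn => ?_⟩
  have hn1 : 1 ≤ n := le_trans (le_max_right _ _) hn
  have hN1 : 1 ≤ max N₀ 1 := le_max_right _ _
  have h1 := hS n (max N₀ 1) hn1 hN1
  have h2 := hS (max N₀ 1) n hN1 hn1
  rw [Nat.mul_comm] at h2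
  have hbn : b n < ε / 2 := hN₀ n (le_trans (le_max_left _ _) hn)
  have hbN : b (max N₀ 1) < ε / 2 := hN₀ _ (le_max_left _ _)
  rw [Real.dist_eq]
  calc |S n - S (max N₀ 1)|
      ≤ |S n - S (n * max N₀ 1)| + |S (n * max N₀ 1) - S (max N₀ 1)| :=
        abs_sub_le _ _ _
    _ ≤ b n + b (max N₀ 1) := by
        rw [abs_sub_comm]
        exact add_le_add h1 h2
    _ < ε := by linarith

/-- Young integration by parts: if `f` is `α`-Hölder and `g` is `β`-Hölder on `[0,T]` with
`α + β > 1`, then the Young integrals `∫₀ᵗ f dg` and `∫₀ᵗ g df` exist (as limits of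
Riemann–Stieltjes sums) and `f t * g t = f 0 * g 0 + ∫₀ᵗ g df + ∫₀ᵗ f dg`. -/
theorem stmt_10 (T : ℝ) (hT : 0 < T) (f g : ℝ → ℝ) (α β Cf Cg : NNReal)
    (hα : 0 < α) (hβ : 0 < β) (hαβ : 1 < (α : ℝ) + (β : ℝ))
    (hf : HolderOnWith Cf α f (Set.Icc 0 T))
    (hg : HolderOnWith Cg β g (Set.Icc 0 T)) :
    ∃ Ifg Igf : ℝ → ℝ, ∀ t ∈ Set.Icc (0:ℝ) T,
      Tendsto (fun n => RSsum f g t n) atTop (nhds (Ifg t)) ∧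
      Tendsto (fun n => RSsum g f t n) atTop (nhds (Igf t)) ∧
      f t * g t = f 0 * g 0 + Igf t + Ifg t := by
  have hαR : (0:ℝ) < α := hα
  have hβR : (0:ℝ) < β := hβ
  have hab0 : (α : ℝ) + (β : ℝ) ≠ 0 := by linarith
  set θ : ℝ := (α : ℝ) + β with hθdef
  have hθ1 : 1 < θ := hαβ
  have hθ0 : 0 < θ := by linarith
  set r : ℝ := (1/3 : ℝ) ^ θ + (2/3 : ℝ) ^ θ with hrdef
  have hr0 : 0 ≤ r :=
    add_nonneg (Real.rpow_nonneg (by norm_num) _) (Real.rpow_nonneg (by norm_num) _)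
  have hr1 : r < 1 := by
    have h1 : (1/3 : ℝ) ^ θ < (1/3 : ℝ) ^ (1:ℝ) :=
      Real.rpow_lt_rpow_of_exponent_gt (by norm_num) (by norm_num) hθ1
    have h2 : (2/3 : ℝ) ^ θ < (2/3 : ℝ) ^ (1:ℝ) :=
      Real.rpow_lt_rpow_of_exponent_gt (by norm_num) (by norm_num) hθ1
    rw [Real.rpow_one] at h1 h2
    rw [hrdef]; linarith
  set C : ℝ := (Cf : ℝ) * Cg with hCdef
  have hC0 : 0 ≤ C := mul_nonneg Cf.coe_nonneg Cg.coe_nonneg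
  set A : ℝ := C / (1 - r) with hAdef
  have hA0 : 0 ≤ A := div_nonneg hC0 (by linarith)
  have hAr : A * r + C ≤ A := by
    have h1 : A * (1 - r) = C := by
      rw [hAdef]
      exact div_mul_cancel₀ C (ne_of_gt (by linarith : (0:ℝ) < 1 - r))
    nlinarith
  have hsplit : ∀ p q : ℝ, 0 ≤ q → q ≤ p → p ≤ 2 * q → p ^ θ + q ^ θ ≤ r * (p + q) ^ θ := by
    intro p q h1 h2 h3
    rw [hrdef]
    exact split_bound θ hθ1.le p q h1 h2 h3
  have hfg' : ∀ u v w : ℝ, 0 ≤ u → u ≤ v → v ≤ w → w ≤ T →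
      |(f v - f u) * (g w - g v)| ≤ C * (w - u) ^ θ := by
    intro u v w h1 h2 h3 h4
    rw [hCdef, hθdef]
    exact holder_cross f g T α β Cf Cg hab0 hf hg u v w h1 h2 h3 h4
  have hgf' : ∀ u v w : ℝ, 0 ≤ u → u ≤ v → v ≤ w → w ≤ T →
      |(g v - g u) * (f w - f v)| ≤ C * (w - u) ^ θ := by
    intro u v w h1 h2 h3 h4
    have h5 := holder_cross g f T β α Cg Cf (by rw [add_comm]; exact hab0) hg hf u v w h1 h2 h3 h4
    rw [add_comm ((β:ℝ)) ((α:ℝ)), mul_comm ((Cg:ℝ)) ((Cf:ℝ))] at h5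
    rw [hCdef, hθdef]
    exact h5
  have main : ∀ t : ℝ, t ∈ Set.Icc (0:ℝ) T → ∃ I I' : ℝ,
      Tendsto (fun n => RSsum f g t n) atTop (nhds I) ∧
      Tendsto (fun n => RSsum g f t n) atTop (nhds I') ∧
      f t * g t = f 0 * g 0 + I' + I := by
    intro t ht
    have ht0 : 0 ≤ t := ht.1
    have hb := bound_tendsto t θ A ht0 hθ1
    obtain ⟨I, hI⟩ := exists_limit (fun n => RSsum f g t n) (fun n => (n:ℝ) * (A * (t/n) ^ θ))
      hb (fun n m hn hm => coarsen f g T θ C A r t hθ0 hC0 hA0 hAr hr0 hsplit hfg' ht n m hn hm)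
    obtain ⟨I', hI'⟩ := exists_limit (fun n => RSsum g f t n) (fun n => (n:ℝ) * (A * (t/n) ^ θ))
      hb (fun n m hn hm => coarsen g f T θ C A r t hθ0 hC0 hA0 hAr hr0 hsplit hgf' ht n m hn hm)
    refine ⟨I, I', hI, hI', ?_⟩
    set Q : ℕ → ℝ := fun n => ∑ i ∈ Finset.range n,
      (f (t * ((i:ℝ)+1) / n) - f (t * i / n)) * (g (t * ((i:ℝ)+1) / n) - g (t * i / n))
      with hQdef
    have hmem : ∀ n : ℕ, 1 ≤ n → ∀ i : ℕ, i ≤ n → t * i / n ∈ Set.Icc (0:ℝ) T := by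
      intro n hn i hin
      have hn0 : (0:ℝ) < n := by exact_mod_cast hn
      constructor
      · positivity
      · have hi : (i:ℝ) ≤ n := by exact_mod_cast hin
        have hle : t * i / n ≤ t := by
          rw [div_le_iff₀ hn0]; nlinarith
        linarith [ht.2]
    have hQb : ∀ n : ℕ, 1 ≤ n → |Q n| ≤ (n:ℝ) * (C * (t/n) ^ θ) := by
      intro n hn
      have hn0 : (0:ℝ) < n := by exact_mod_cast hn
      refine (Finset.abs_sum_le_sum_abs _ _).trans ?_
      have hterm : ∀ i ∈ Finset.range n,
          |(f (t * ((i:ℝ)+1) / n) - f (t * i / n)) * (g (t * ((i:ℝ)+1) / n) - g (t * i / n))|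
            ≤ C * (t/n) ^ θ := by
        intro i hi
        have hi' := Finset.mem_range.mp hi
        have hx1 : t * (i:ℝ) / n ∈ Set.Icc (0:ℝ) T := hmem n hn i hi'.le
        have hcast : t * ((i:ℝ)+1) / n = t * ((i+1 : ℕ) : ℝ) / n := by push_cast; ring
        have hx2 : t * ((i:ℝ)+1) / n ∈ Set.Icc (0:ℝ) T := by
          rw [hcast]; exact hmem n hn (i+1) hi'
        have hgap : |t * ((i:ℝ)+1) / n - t * (i:ℝ) / n| = t/n := by
          have e : t * ((i:ℝ)+1) / n - t * (i:ℝ) / n = t/n := by field_simp; ring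
          rw [e, abs_of_nonneg (by positivity)]
        have h1 := holderOn_abs_le hf hx2 hx1
        have h2 := holderOn_abs_le hg hx2 hx1
        rw [hgap] at h1 h2
        rw [abs_mul]
        calc |f (t * ((i:ℝ)+1) / n) - f (t * i / n)| * |g (t * ((i:ℝ)+1) / n) - g (t * i / n)|
            ≤ ((Cf:ℝ) * (t/n) ^ ((α:ℝ))) * ((Cg:ℝ) * (t/n) ^ ((β:ℝ))) :=
              mul_le_mul h1 h2 (abs_nonneg _)
                (mul_nonneg Cf.coe_nonneg (Real.rpow_nonneg (by positivity) _))
          _ = ((Cf:ℝ) * Cg) * ((t/n) ^ ((α:ℝ)) * (t/n) ^ ((β:ℝ))) := by ring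
          _ = C * (t/n) ^ θ := by
              rw [hCdef, hθdef, Real.rpow_add' (by positivity) hab0]
      refine (Finset.sum_le_sum hterm).trans ?_
      rw [Finset.sum_const, Finset.card_range, nsmul_eq_mul]
    have hident : ∀ n : ℕ, 1 ≤ n →
        RSsum f g t n + RSsum g f t n + Q n = f t * g t - f 0 * g 0 := by
      intro n hn
      have hn0 : ((n:ℝ)) ≠ 0 := by
        have : (0:ℝ) < n := by exact_mod_cast hn
        exact ne_of_gt this
      have htele := Finset.sum_range_sub (fun i : ℕ => f (t * i / n) * g (t * i / n)) n
      have hcomb : RSsum f g t n + RSsum g f t n + Q n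
          = ∑ i ∈ Finset.range n,
              (f (t * ((i+1 : ℕ):ℝ) / n) * g (t * ((i+1 : ℕ):ℝ) / n)
                - f (t * (i:ℝ) / n) * g (t * (i:ℝ) / n)) := by
        rw [RSsum, RSsum, hQdef, ← Finset.sum_add_distrib, ← Finset.sum_add_distrib]
        refine Finset.sum_congr rfl fun i _ => ?_
        push_cast
        ring
      rw [hcomb]
      rw [htele]
      have h1 : t * ((n:ℕ):ℝ) / n = t := by
        rw [mul_div_assoc, div_self hn0, mul_one]
      have h2 : t * ((0:ℕ):ℝ) / n = 0 := by norm_num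
      rw [h1, h2]
    have hQ0 : Tendsto Q atTop (nhds 0) := by
      have habs : Tendsto (fun n => |Q n|) atTop (nhds 0) :=
        squeeze_zero' (Eventually.of_forall fun n => abs_nonneg _)
          (eventually_atTop.2 ⟨1, hQb⟩) (bound_tendsto t θ C ht0 hθ1)
      rw [tendsto_iff_dist_tendsto_zero]
      simpa [Real.dist_eq] using habs
    have hlhs : Tendsto (fun n => RSsum f g t n + RSsum g f t n + Q n) atTop
        (nhds (I + I' + 0)) := (hI.add hI').add hQ0
    have hrhs : Tendsto (fun n => RSsum f g t n + RSsum g f t n + Q n) atTop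
        (nhds (f t * g t - f 0 * g 0)) := by
      refine Tendsto.congr' ?_ tendsto_const_nhds
      filter_upwards [eventually_ge_atTop 1] with n hn
      exact (hident n hn).symm
    have hu := tendsto_nhds_unique hlhs hrhs
    linarith [hu]
  refine ⟨fun t => if h' : t ∈ Set.Icc (0:ℝ) T then (main t h').choose else 0,
          fun t => if h' : t ∈ Set.Icc (0:ℝ) T then (main t h').choose_spec.choose else 0, ?_⟩
  intro t ht
  simp only [dif_pos ht]
  exact (main t ht).choose_spec.choose_spec
end

section
/- Let B^H be a fractional Brownian motion with Hurst parameter H ∈ (0,1) and let θ > 0. Then E[(e^{-θt}(e^{θt} B^H_t − θ ∫₀ᵗ e^{θs} B^H_s ds))²] → H Γ(2H)/θ^{2H} as t → ∞. -/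
open Real Filter MeasureTheory Set intervalIntegral
set_option maxHeartbeats 1000000


variable {p θ : ℝ}

lemma contEG (c : ℝ) (hp : 0 < p) : Continuous fun v : ℝ => Real.exp (c*v) * v ^ p :=
  (Real.continuous_exp.comp (continuous_const.mul continuous_id)).mul
    (Real.continuous_rpow_const hp.le)

noncomputable def Fc (c p t : ℝ) : ℝ := ∫ v in (0:ℝ)..t, Real.exp (c*v) * v ^ p

lemma Fc_zero (c : ℝ) : Fc c p 0 = 0 := intervalIntegral.integral_same

lemma Fc_hasDerivAt (c : ℝ) (hp : 0 < p) (x : ℝ) :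
    HasDerivAt (Fc c p) (Real.exp (c*x) * x ^ p) x :=
  intervalIntegral.integral_hasDerivAt_right ((contEG c hp).intervalIntegrable _ _)
    ((contEG c hp).aestronglyMeasurable.stronglyMeasurableAtFilter)
    (contEG c hp).continuousAt

lemma Fc_cont (c : ℝ) (hp : 0 < p) : Continuous (Fc c p) := by
  have : Differentiable ℝ (Fc c p) := fun x => (Fc_hasDerivAt c hp x).differentiableAt
  exact this.continuous

lemma hasDerivAt_expc (c x : ℝ) : HasDerivAt (fun s : ℝ => Real.exp (c*s)) (c * Real.exp (c*x)) x := by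
  have := ((hasDerivAt_id x).const_mul c).exp
  simp only [id, mul_one] at this
  rwa [mul_comm] at this

lemma expInt (hθ : θ ≠ 0) (t : ℝ) :
    ∫ s in (0:ℝ)..t, Real.exp (θ*s) = (Real.exp (θ*t) - 1) / θ := by
  have hderiv : ∀ x ∈ uIcc (0:ℝ) t,
      HasDerivAt (fun s => Real.exp (θ*s) / θ) (Real.exp (θ*x)) x := by
    intro x _
    have := (hasDerivAt_expc θ x).div_const θ
    refine this.congr_deriv ?_
    field_simp
  rw [intervalIntegral.integral_eq_sub_of_hasDerivAt hderiv
    ((Real.continuous_exp.comp (continuous_const.mul continuous_id)).intervalIntegrable _ _)]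
  simp [Real.exp_zero]
  ring

lemma intJ (hθ : 0 < θ) (hp : 0 < p) (t : ℝ) :
    ∫ s in (0:ℝ)..t, Real.exp (2*θ*s) * Fc (-θ) p s
      = (Real.exp (2*θ*t) * Fc (-θ) p t - Fc θ p t) / (2*θ) := by
  have hderiv : ∀ x ∈ uIcc (0:ℝ) t,
      HasDerivAt (fun s => (Real.exp (2*θ*s) * Fc (-θ) p s - Fc θ p s)/(2*θ))
        (Real.exp (2*θ*x) * Fc (-θ) p x) x := by
    intro x _
    have h1 := ((hasDerivAt_expc (2*θ) x).mul (Fc_hasDerivAt (-θ) hp x)).sub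
      (Fc_hasDerivAt θ hp x)
    have h2 := h1.div_const (2*θ)
    refine h2.congr_deriv ?_
    rw [show Real.exp (2*θ*x) * (Real.exp (-θ*x) * x ^ p) = Real.exp (θ*x) * x ^ p by
      rw [← mul_assoc, ← Real.exp_add]; congr 2; ring]
    field_simp
    ring
  rw [intervalIntegral.integral_eq_sub_of_hasDerivAt hderiv
    (((Real.continuous_exp.comp (continuous_const.mul continuous_id)).mul
      (Fc_cont (-θ) hp)).intervalIntegrable _ _)]
  simp [Fc_zero]

lemma intK (hθ : 0 < θ) (hp : 0 < p) (t : ℝ) :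
    ∫ s in (0:ℝ)..t, Real.exp (-(2*θ)*s) * Fc θ p s
      = (Fc (-θ) p t - Real.exp (-(2*θ)*t) * Fc θ p t) / (2*θ) := by
  have hderiv : ∀ x ∈ uIcc (0:ℝ) t,
      HasDerivAt (fun s => (Fc (-θ) p s - Real.exp (-(2*θ)*s) * Fc θ p s)/(2*θ))
        (Real.exp (-(2*θ)*x) * Fc θ p x) x := by
    intro x _
    have h1 := (Fc_hasDerivAt (-θ) hp x).sub
      ((hasDerivAt_expc (-(2*θ)) x).mul (Fc_hasDerivAt θ hp x))
    have h2 := h1.div_const (2*θ)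
    refine h2.congr_deriv ?_
    rw [show Real.exp (-(2*θ)*x) * (Real.exp (θ*x) * x ^ p) = Real.exp (-θ*x) * x ^ p by
      rw [← mul_assoc, ← Real.exp_add]; congr 2; ring]
    field_simp
    ring
  rw [intervalIntegral.integral_eq_sub_of_hasDerivAt hderiv
    (((Real.continuous_exp.comp (continuous_const.mul continuous_id)).mul
      (Fc_cont θ hp)).intervalIntegrable _ _)]
  simp [Fc_zero]


lemma integral_reflect (f : ℝ → ℝ) (t : ℝ) :
    ∫ u in (0:ℝ)..t, f (t - u) = ∫ u in (0:ℝ)..t, f u := by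
  rw [intervalIntegral.integral_comp_sub_left, sub_self, sub_zero]

lemma subL (hp : 0 < p) (θ t : ℝ) :
    ∫ u in (0:ℝ)..t, Real.exp (θ*u) * (t-u)^p = Real.exp (θ*t) * Fc (-θ) p t := by
  have h1 : (∫ u in (0:ℝ)..t, Real.exp (θ*u) * (t-u)^p)
      = ∫ u in (0:ℝ)..t, (fun v => Real.exp (θ*t) * (Real.exp (-θ*v) * v^p)) (t-u) := by
    refine intervalIntegral.integral_congr fun u _ => ?_
    simp only
    rw [← mul_assoc, ← Real.exp_add]
    congr 2
    ring
  rw [h1, integral_reflect (fun v => Real.exp (θ*t) * (Real.exp (-θ*v) * v^p)) t,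
    intervalIntegral.integral_const_mul]
  rfl

lemma subR (hp : 0 < p) (θ s t : ℝ) :
    ∫ u in s..t, Real.exp (θ*u) * (u-s)^p = Real.exp (θ*s) * Fc θ p (t-s) := by
  have h1 : (∫ u in s..t, Real.exp (θ*u) * (u-s)^p)
      = ∫ u in s..t, (fun v => Real.exp (θ*s) * (Real.exp (θ*v) * v^p)) (u - s) := by
    refine intervalIntegral.integral_congr fun u _ => ?_
    simp only
    rw [← mul_assoc, ← Real.exp_add]
    congr 2
    ring
  rw [h1, intervalIntegral.integral_comp_sub_right (fun v => Real.exp (θ*s) * (Real.exp (θ*v) * v^p)) s,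
    sub_self, intervalIntegral.integral_const_mul]
  rfl

lemma contAbs (hp : 0 < p) (θ s : ℝ) : Continuous fun u : ℝ => Real.exp (θ*u) * |s-u|^p :=
  (Real.continuous_exp.comp (continuous_const.mul continuous_id)).mul
    ((Real.continuous_rpow_const hp.le).comp (continuous_const.sub continuous_id).abs)

lemma intW (hp : 0 < p) (θ : ℝ) {s t : ℝ} (hs : 0 ≤ s) (hst : s ≤ t) :
    ∫ u in (0:ℝ)..t, Real.exp (θ*u) * |s-u|^p
      = Real.exp (θ*s) * (Fc (-θ) p s + Fc θ p (t-s)) := by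
  rw [← intervalIntegral.integral_add_adjacent_intervals (a := (0:ℝ)) (b := s) (c := t)
    ((contAbs hp θ s).intervalIntegrable _ _) ((contAbs hp θ s).intervalIntegrable _ _)]
  have h1 : (∫ u in (0:ℝ)..s, Real.exp (θ*u) * |s-u|^p)
      = Real.exp (θ*s) * Fc (-θ) p s := by
    rw [intervalIntegral.integral_congr (g := fun u => Real.exp (θ*u) * (s-u)^p)
      (fun u hu => by
        rw [uIcc_of_le hs] at hu
        simp only
        rw [abs_of_nonneg (by linarith [hu.2])])]
    exact subL hp θ s
  have h2 : (∫ u in s..t, Real.exp (θ*u) * |s-u|^p)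
      = Real.exp (θ*s) * Fc θ p (t-s) := by
    rw [intervalIntegral.integral_congr (g := fun u => Real.exp (θ*u) * (u-s)^p)
      (fun u hu => by
        rw [uIcc_of_le hst] at hu
        simp only
        rw [abs_of_nonpos (by linarith [hu.1]), neg_sub])]
    exact subR hp θ s t
  rw [h1, h2]
  ring



lemma intInner (hθ : 0 < θ) (hp : 0 < p) {s t : ℝ} (hs : 0 ≤ s) (hst : s ≤ t) :
    ∫ u in (0:ℝ)..t, Real.exp (θ*u) * ((s^p + u^p - |u-s|^p)/2)
      = (s^p * (Real.exp (θ*t) - 1)/θ + Fc θ p t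
          - Real.exp (θ*s) * (Fc (-θ) p s + Fc θ p (t-s)))/2 := by
  have hW := intW hp θ hs hst
  have hE := expInt (θ := θ) hθ.ne' t
  have hcg : (∫ u in (0:ℝ)..t, Real.exp (θ*u) * ((s^p + u^p - |u-s|^p)/2))
      = ∫ u in (0:ℝ)..t, ((s^p/2) * Real.exp (θ*u) + (1/2)*(Real.exp (θ*u) * u^p)
          - (1/2)*(Real.exp (θ*u) * |s-u|^p)) := by
    refine intervalIntegral.integral_congr fun u _ => ?_
    rw [abs_sub_comm]
    ring
  rw [hcg, intervalIntegral.integral_sub, intervalIntegral.integral_add,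
      intervalIntegral.integral_const_mul, intervalIntegral.integral_const_mul,
      intervalIntegral.integral_const_mul, hE, hW]
  · simp only [Fc]; ring
  · exact ((Real.continuous_exp.comp (continuous_const.mul continuous_id)).intervalIntegrable _ _).const_mul _
  · exact ((contEG θ hp).intervalIntegrable _ _).const_mul _
  · exact (((Real.continuous_exp.comp (continuous_const.mul continuous_id)).intervalIntegrable _ _).const_mul _).add
      (((contEG θ hp).intervalIntegrable _ _).const_mul _)
  · exact ((contAbs hp θ s).intervalIntegrable _ _).const_mul _

lemma intA (hθ : 0 < θ) (hp : 0 < p) {t : ℝ} (ht : 0 ≤ t) :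
    ∫ s in (0:ℝ)..t, Real.exp (θ*s) * ((t^p + s^p - |s-t|^p)/2)
      = (t^p * (Real.exp (θ*t) - 1)/θ + Fc θ p t - Real.exp (θ*t) * Fc (-θ) p t)/2 := by
  have := intInner hθ hp ht (le_refl t)
  simpa [Fc_zero] using this

lemma subC (hθ : 0 < θ) (hp : 0 < p) (t : ℝ) :
    ∫ s in (0:ℝ)..t, Real.exp (2*θ*s) * Fc θ p (t-s)
      = Real.exp (2*θ*t) * ((Fc (-θ) p t - Real.exp (-(2*θ)*t) * Fc θ p t) / (2*θ)) := by
  have h1 : (∫ s in (0:ℝ)..t, Real.exp (2*θ*s) * Fc θ p (t-s))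
      = ∫ s in (0:ℝ)..t, (fun v => Real.exp (2*θ*t) * (Real.exp (-(2*θ)*v) * Fc θ p v)) (t-s) := by
    refine intervalIntegral.integral_congr fun u _ => ?_
    simp only
    rw [← mul_assoc, ← Real.exp_add]
    congr 2
    ring
  rw [h1, integral_reflect (fun v => Real.exp (2*θ*t) * (Real.exp (-(2*θ)*v) * Fc θ p v)) t,
      intervalIntegral.integral_const_mul, intK hθ hp t]

lemma intC (hθ : 0 < θ) (hp : 0 < p) {t : ℝ} (ht : 0 ≤ t) :
    ∫ s in (0:ℝ)..t, Real.exp (θ*s) *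
        (∫ u in (0:ℝ)..t, Real.exp (θ*u) * ((s^p + u^p - |u-s|^p)/2))
      = Fc θ p t * (Real.exp (θ*t) - 1)/θ
          - (Real.exp (2*θ*t) * Fc (-θ) p t - Fc θ p t)/(2*θ) := by
  have hcg : (∫ s in (0:ℝ)..t, Real.exp (θ*s) *
        (∫ u in (0:ℝ)..t, Real.exp (θ*u) * ((s^p + u^p - |u-s|^p)/2)))
      = ∫ s in (0:ℝ)..t,
        ((((Real.exp (θ*t)-1)/θ/2) * (Real.exp (θ*s) * s^p)
          + (Fc θ p t/2) * Real.exp (θ*s)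
          - (1/2) * (Real.exp (2*θ*s) * Fc (-θ) p s))
          - (1/2) * (Real.exp (2*θ*s) * Fc θ p (t-s))) := by
    refine intervalIntegral.integral_congr fun s hs' => ?_
    rw [uIcc_of_le ht] at hs'
    rw [intInner hθ hp hs'.1 hs'.2]
    have key : Real.exp (θ*s) * Real.exp (θ*s) = Real.exp (2*θ*s) := by
      rw [← Real.exp_add]; congr 1; ring
    linear_combination (-(1/2)*(Fc (-θ) p s + Fc θ p (t-s))) * key
  have ii_exp : IntervalIntegrable (fun s : ℝ => Real.exp (θ*s)) volume 0 t :=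
    (Real.continuous_exp.comp (continuous_const.mul continuous_id)).intervalIntegrable _ _
  have ii_p : IntervalIntegrable (fun s : ℝ => Real.exp (θ*s) * s^p) volume 0 t :=
    (contEG θ hp).intervalIntegrable _ _
  have ii_J : IntervalIntegrable (fun s : ℝ => Real.exp (2*θ*s) * Fc (-θ) p s) volume 0 t :=
    ((Real.continuous_exp.comp (continuous_const.mul continuous_id)).mul
      (Fc_cont (-θ) hp)).intervalIntegrable _ _
  have ii_K : IntervalIntegrable (fun s : ℝ => Real.exp (2*θ*s) * Fc θ p (t-s)) volume 0 t :=
    ((Real.continuous_exp.comp (continuous_const.mul continuous_id)).mul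
      ((Fc_cont θ hp).comp (continuous_const.sub continuous_id))).intervalIntegrable _ _
  rw [hcg, intervalIntegral.integral_sub
      (((ii_p.const_mul _).add (ii_exp.const_mul _)).sub (ii_J.const_mul _)) (ii_K.const_mul _),
    intervalIntegral.integral_sub ((ii_p.const_mul _).add (ii_exp.const_mul _)) (ii_J.const_mul _),
    intervalIntegral.integral_add (ii_p.const_mul _) (ii_exp.const_mul _),
    intervalIntegral.integral_const_mul, intervalIntegral.integral_const_mul,
    intervalIntegral.integral_const_mul, intervalIntegral.integral_const_mul,
    expInt hθ.ne' t, intJ hθ hp t, subC hθ hp t]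
  rw [show Real.exp (-(2*θ)*t) = (Real.exp (θ*t) * Real.exp (θ*t))⁻¹ by
      rw [show -(2*θ)*t = -(θ*t + θ*t) by ring, Real.exp_neg, Real.exp_add],
    show Real.exp (2*θ*t) = Real.exp (θ*t) * Real.exp (θ*t) by
      rw [← Real.exp_add]; congr 1; ring]
  simp only [Fc]
  have hx := Real.exp_ne_zero (θ*t)
  field_simp
  ring

lemma Valgebra (hθ : 0 < θ) (hp : 0 < p) (t : ℝ) :
    t^p - 2*(θ*Real.exp (-θ*t)) *
        ((t^p * (Real.exp (θ*t) - 1)/θ + Fc θ p t - Real.exp (θ*t) * Fc (-θ) p t)/2)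
      + (θ*Real.exp (-θ*t))^2 *
        (Fc θ p t * (Real.exp (θ*t) - 1)/θ
          - (Real.exp (2*θ*t) * Fc (-θ) p t - Fc θ p t)/(2*θ))
    = t^p*Real.exp (-θ*t) + (θ/2)*Fc (-θ) p t
        - (θ/2)*(Real.exp (-θ*t))^2*Fc θ p t := by
  rw [show Real.exp (-θ*t) = (Real.exp (θ*t))⁻¹ by
      rw [show -θ*t = -(θ*t) by ring, Real.exp_neg],
    show Real.exp (2*θ*t) = Real.exp (θ*t) * Real.exp (θ*t) by
      rw [← Real.exp_add]; congr 1; ring]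
  have hx := Real.exp_ne_zero (θ*t)
  field_simp
  ring

lemma Gaux (hθ : 0 < θ) (hp : 0 < p) :
    IntegrableOn (fun v : ℝ => Real.exp (-θ*v) * v ^ p) (Ioi 0) := by
  have h := integrableOn_rpow_mul_exp_neg_mul_rpow (p := 1) (s := p) (b := θ)
    (by linarith) one_pos hθ
  refine (h.congr_fun (fun x hx => ?_) measurableSet_Ioi)
  simp [Real.rpow_one, mul_comm]

lemma Glim (hθ : 0 < θ) (hp : 0 < p) :
    Tendsto (fun t => Fc (-θ) p t) atTop
      (nhds ((1/θ)^(p+1) * Real.Gamma (p+1))) := by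
  have hval : (1/θ)^(p+1) * Real.Gamma (p+1)
      = ∫ v in Ioi (0:ℝ), Real.exp (-θ*v) * v ^ p := by
    rw [← Real.integral_rpow_mul_exp_neg_mul_Ioi (by linarith : (0:ℝ) < p+1) hθ]
    refine (setIntegral_congr_fun measurableSet_Ioi (fun x _ => ?_)).symm
    rw [add_sub_cancel_right, show -θ*x = -(θ*x) by ring, mul_comm]
  rw [hval]
  have h := MeasureTheory.intervalIntegral_tendsto_integral_Ioi 0 (Gaux hθ hp) tendsto_id
  simpa [Fc] using h

lemma explim2 (hθ : 0 < θ) (hp : 0 < p) :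
    Tendsto (fun t => (Real.exp (-θ*t))^2 * Fc θ p t) atTop (nhds 0) := by
  have hub : ∀ t : ℝ, 0 ≤ t →
      (Real.exp (-θ*t))^2 * Fc θ p t ≤ (t^(p+1) * Real.exp (-θ*t)) * (1/(p+1)) := by
    intro t ht
    have hFb : Fc θ p t ≤ Real.exp (θ*t) * (t^(p+1)/(p+1)) := by
      have h1 : Fc θ p t ≤ ∫ v in (0:ℝ)..t, Real.exp (θ*t) * v ^ p := by
        refine intervalIntegral.integral_mono_on ht ((contEG θ hp).intervalIntegrable _ _)
          ((continuous_const.mul (Real.continuous_rpow_const hp.le)).intervalIntegrable _ _) ?_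
        intro v hv
        have h2 : Real.exp (θ*v) ≤ Real.exp (θ*t) :=
          Real.exp_le_exp.2 (by nlinarith [hv.1, hv.2, hθ])
        exact mul_le_mul_of_nonneg_right h2 (Real.rpow_nonneg hv.1 p)
      rw [intervalIntegral.integral_const_mul, integral_rpow (Or.inl (by linarith))] at h1
      rw [Real.zero_rpow (by linarith : p + 1 ≠ 0)] at h1
      simpa using h1
    have hsq : (Real.exp (-θ*t))^2 * Real.exp (θ*t) = Real.exp (-θ*t) := by
      rw [sq, mul_assoc, ← Real.exp_add, ← Real.exp_add]
      congr 1
      ring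
    calc (Real.exp (-θ*t))^2 * Fc θ p t
        ≤ (Real.exp (-θ*t))^2 * (Real.exp (θ*t) * (t^(p+1)/(p+1))) := by
          exact mul_le_mul_of_nonneg_left hFb (sq_nonneg _)
      _ = (t^(p+1) * Real.exp (-θ*t)) * (1/(p+1)) := by
          rw [← mul_assoc, hsq]; ring
  have hlb : ∀ t : ℝ, 0 ≤ t → 0 ≤ (Real.exp (-θ*t))^2 * Fc θ p t := by
    intro t ht
    have : 0 ≤ Fc θ p t := by
      refine intervalIntegral.integral_nonneg ht (fun v hv => ?_)
      exact mul_nonneg (Real.exp_pos _).le (Real.rpow_nonneg hv.1 p)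
    positivity
  have hg : Tendsto (fun t : ℝ => (t^(p+1) * Real.exp (-θ*t)) * (1/(p+1))) atTop (nhds 0) := by
    have := (tendsto_rpow_mul_exp_neg_mul_atTop_nhds_zero (p+1) θ hθ).mul_const (1/(p+1))
    simpa using this
  refine squeeze_zero' ?_ ?_ hg
  · filter_upwards [eventually_ge_atTop (0:ℝ)] with t ht using hlb t ht
  · filter_upwards [eventually_ge_atTop (0:ℝ)] with t ht using hub t ht

theorem stmt_11 {Ω : Type*} [MeasureSpace Ω] (P : Measure Ω) [IsProbabilityMeasure P]
    (H θ : ℝ) (hH : H ∈ Set.Ioo (0:ℝ) 1) (hθ : 0 < θ)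
    (B : ℝ → Ω → ℝ)
    (hmeas : Measurable (Function.uncurry B))
    (hcont : ∀ ω, Continuous (fun t => B t ω))
    (hcentered : ∀ t : ℝ, 0 ≤ t → ∫ ω, B t ω ∂P = 0)
    (hcov : ∀ s t : ℝ, 0 ≤ s → 0 ≤ t →
      ∫ ω, B s ω * B t ω ∂P = (s ^ (2 * H) + t ^ (2 * H) - |t - s| ^ (2 * H)) / 2) :
    Tendsto (fun t : ℝ => ∫ ω,
        (Real.exp (-θ * t) *
          (Real.exp (θ * t) * B t ω - θ * ∫ s in (0:ℝ)..t, Real.exp (θ * s) * B s ω)) ^ 2 ∂P)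
      atTop (nhds (H * Real.Gamma (2 * H) / θ ^ (2 * H))) := by
  obtain ⟨hH0, hH1⟩ := hH
  set p : ℝ := 2 * H with hpdef
  have hp : 0 < p := by positivity
  -- measurability of slices
  have hBm : ∀ s : ℝ, Measurable (B s) := fun s => hmeas.comp measurable_prodMk_left
  -- square integrability
  have hBsq : ∀ s : ℝ, 0 < s → Integrable (fun ω => B s ω * B s ω) P := by
    intro s hs
    by_contra hni
    have h0 := integral_undef hni
    rw [hcov s s hs.le hs.le] at h0
    rw [sub_self, abs_zero, Real.zero_rpow hp.ne'] at h0
    nlinarith [Real.rpow_pos_of_pos hs p]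
  have hsqabs : ∀ a b : ℝ, |a * b| ≤ (a*a + b*b)/2 := by
    intro a b
    have h1 : |a * b| = |a| * |b| := abs_mul a b
    nlinarith [sq_nonneg (|a| - |b|), abs_mul_abs_self a, abs_mul_abs_self b]
  have hprod : ∀ s u : ℝ, 0 < s → 0 < u → Integrable (fun ω => B s ω * B u ω) P := by
    intro s u hs hu
    refine Integrable.mono' (((hBsq s hs).add (hBsq u hu)).div_const 2)
      (((hBm s).mul (hBm u)).aestronglyMeasurable)
      (Eventually.of_forall fun ω => ?_)
    rw [Real.norm_eq_abs]
    exact hsqabs _ _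
  have hBsqval : ∀ s : ℝ, 0 < s → ∫ ω, B s ω * B s ω ∂P = s ^ p := by
    intro s hs
    rw [hcov s s hs.le hs.le, sub_self, abs_zero, Real.zero_rpow hp.ne']
    ring
  have hprodInt : ∀ s u : ℝ, 0 < s → 0 < u →
      ∫ ω, |B s ω * B u ω| ∂P ≤ (s^p + u^p)/2 := by
    intro s u hs hu
    have h1 : ∫ ω, |B s ω * B u ω| ∂P ≤ ∫ ω, (B s ω * B s ω + B u ω * B u ω)/2 ∂P := by
      refine integral_mono (hprod s u hs hu).abs
        (((hBsq s hs).add (hBsq u hu)).div_const 2) fun ω => hsqabs _ _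
    rw [MeasureTheory.integral_div, integral_add (hBsq s hs) (hBsq u hu), hBsqval s hs, hBsqval u hu] at h1
    exact h1
  -- the main variance formula for t > 0
  have main : ∀ t : ℝ, 0 < t →
      (∫ ω, (Real.exp (-θ * t) *
          (Real.exp (θ * t) * B t ω - θ * ∫ s in (0:ℝ)..t, Real.exp (θ * s) * B s ω)) ^ 2 ∂P)
        = t^p * Real.exp (-θ*t) + (θ/2) * Fc (-θ) p t
            - (θ/2) * (Real.exp (-θ*t))^2 * Fc θ p t := by
    intro t ht
    set I : Ω → ℝ := fun ω => ∫ s in Set.Ioc (0:ℝ) t, Real.exp (θ*s) * B s ω with hI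
    have haemem : ∀ᵐ s ∂(volume.restrict (Set.Ioc (0:ℝ) t)), s ∈ Set.Ioc (0:ℝ) t :=
      ae_restrict_mem measurableSet_Ioc
    -- integrability of the cross kernel on the product space
    have key1 : Integrable (Function.uncurry fun s (ω : Ω) => Real.exp (θ*s) * (B t ω * B s ω))
        ((volume.restrict (Set.Ioc (0:ℝ) t)).prod P) := by
      show Integrable (fun q : ℝ × Ω => Real.exp (θ*q.1) * (B t q.2 * B q.1 q.2))
        ((volume.restrict (Set.Ioc (0:ℝ) t)).prod P)
      have haesm : AEStronglyMeasurable
          (fun q : ℝ × Ω => Real.exp (θ*q.1) * (B t q.2 * B q.1 q.2)) ((volume.restrict (Set.Ioc (0:ℝ) t)).prod P) := by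
        refine Measurable.aestronglyMeasurable ?_
        exact ((Real.measurable_exp.comp (measurable_const.mul measurable_fst)).mul
          (((hBm t).comp measurable_snd).mul hmeas))
      rw [integrable_prod_iff haesm]
      constructor
      · filter_upwards [haemem] with s hs
        exact ((hprod t s ht hs.1).const_mul _)
      · refine Integrable.mono' (g := fun s => Real.exp (θ*s) * ((t^p + s^p)/2)) ?_
          haesm.norm.integral_prod_right' ?_
        · have hcont2 : Continuous fun s : ℝ => Real.exp (θ*s) * ((t^p + s^p)/2) := by
            refine (Real.continuous_exp.comp (continuous_const.mul continuous_id)).mul ?_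
            exact (continuous_const.add (Real.continuous_rpow_const hp.le)).div_const 2
          exact hcont2.integrableOn_Ioc
        · filter_upwards [haemem] with s hs
          have h2 : (∫ ω, ‖Real.exp (θ*s) * (B t ω * B s ω)‖ ∂P)
              = Real.exp (θ*s) * ∫ ω, |B t ω * B s ω| ∂P := by
            rw [← MeasureTheory.integral_const_mul]
            refine integral_congr_ae (Eventually.of_forall fun ω => ?_)
            show ‖Real.exp (θ*s) * (B t ω * B s ω)‖ = Real.exp (θ*s) * |B t ω * B s ω|
            rw [Real.norm_eq_abs, abs_mul, abs_of_pos (Real.exp_pos _)]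
          show ‖∫ ω, ‖Real.exp (θ*s) * (B t ω * B s ω)‖ ∂P‖ ≤ Real.exp (θ*s) * ((t^p + s^p)/2)
          rw [Real.norm_eq_abs, h2, abs_of_nonneg (by positivity :
            (0:ℝ) ≤ Real.exp (θ*s) * ∫ ω, |B t ω * B s ω| ∂P)]
          have h3 := hprodInt t s ht hs.1
          have := Real.exp_pos (θ*s)
          nlinarith
    have haemem2 : ∀ᵐ z ∂((volume.restrict (Set.Ioc (0:ℝ) t)).prod
        (volume.restrict (Set.Ioc (0:ℝ) t))), z ∈ Set.Ioc (0:ℝ) t ×ˢ Set.Ioc (0:ℝ) t := by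
      rw [Measure.prod_restrict]
      exact ae_restrict_mem (measurableSet_Ioc.prod measurableSet_Ioc)
    have key2 : Integrable (Function.uncurry fun z (ω : Ω) =>
        (Real.exp (θ*z.1) * Real.exp (θ*z.2)) * (B z.1 ω * B z.2 ω))
        (((volume.restrict (Set.Ioc (0:ℝ) t)).prod (volume.restrict (Set.Ioc (0:ℝ) t))).prod P) := by
      show Integrable (fun q : (ℝ × ℝ) × Ω =>
        (Real.exp (θ*q.1.1) * Real.exp (θ*q.1.2)) * (B q.1.1 q.2 * B q.1.2 q.2))
        (((volume.restrict (Set.Ioc (0:ℝ) t)).prod (volume.restrict (Set.Ioc (0:ℝ) t))).prod P)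
      have haesm2 : AEStronglyMeasurable (fun q : (ℝ × ℝ) × Ω =>
          (Real.exp (θ*q.1.1) * Real.exp (θ*q.1.2)) * (B q.1.1 q.2 * B q.1.2 q.2))
          (((volume.restrict (Set.Ioc (0:ℝ) t)).prod (volume.restrict (Set.Ioc (0:ℝ) t))).prod P) := by
        refine Measurable.aestronglyMeasurable ?_
        have hm1 : Measurable fun q : (ℝ × ℝ) × Ω => B q.1.1 q.2 :=
          hmeas.comp ((measurable_fst.fst).prodMk measurable_snd)
        have hm2 : Measurable fun q : (ℝ × ℝ) × Ω => B q.1.2 q.2 :=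
          hmeas.comp ((measurable_fst.snd).prodMk measurable_snd)
        exact ((Real.measurable_exp.comp (measurable_const.mul measurable_fst.fst)).mul
          (Real.measurable_exp.comp (measurable_const.mul measurable_fst.snd))).mul (hm1.mul hm2)
      rw [integrable_prod_iff haesm2]
      constructor
      · filter_upwards [haemem2] with z hz
        exact ((hprod z.1 z.2 hz.1.1 hz.2.1).const_mul _)
      · refine Integrable.mono'
          (g := fun z : ℝ × ℝ => (Real.exp (θ*z.1) * Real.exp (θ*z.2)) * ((z.1^p + z.2^p)/2)) ?_
          haesm2.norm.integral_prod_right' ?_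
        · have i1 : Integrable (fun z : ℝ × ℝ =>
              (Real.exp (θ*z.1) * z.1^p) * Real.exp (θ*z.2))
              ((volume.restrict (Set.Ioc (0:ℝ) t)).prod (volume.restrict (Set.Ioc (0:ℝ) t))) :=
            ((contEG θ hp).integrableOn_Ioc).mul_prod
              ((Real.continuous_exp.comp (continuous_const.mul continuous_id)).integrableOn_Ioc)
          have i2 : Integrable (fun z : ℝ × ℝ =>
              Real.exp (θ*z.1) * (Real.exp (θ*z.2) * z.2^p))
              ((volume.restrict (Set.Ioc (0:ℝ) t)).prod (volume.restrict (Set.Ioc (0:ℝ) t))) :=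
            ((Real.continuous_exp.comp (continuous_const.mul continuous_id)).integrableOn_Ioc).mul_prod
              ((contEG θ hp).integrableOn_Ioc)
          refine ((i1.add i2).div_const 2).congr (Eventually.of_forall fun z => ?_)
          simp only [Pi.add_apply]
          ring
        · filter_upwards [haemem2] with z hz
          have h2 : (∫ ω, ‖(Real.exp (θ*z.1) * Real.exp (θ*z.2)) * (B z.1 ω * B z.2 ω)‖ ∂P)
              = (Real.exp (θ*z.1) * Real.exp (θ*z.2)) * ∫ ω, |B z.1 ω * B z.2 ω| ∂P := by
            rw [← MeasureTheory.integral_const_mul]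
            refine integral_congr_ae (Eventually.of_forall fun ω => ?_)
            show ‖(Real.exp (θ*z.1) * Real.exp (θ*z.2)) * (B z.1 ω * B z.2 ω)‖
              = (Real.exp (θ*z.1) * Real.exp (θ*z.2)) * |B z.1 ω * B z.2 ω|
            rw [Real.norm_eq_abs, abs_mul, abs_of_pos (by positivity)]
          show ‖∫ ω, ‖(Real.exp (θ*z.1) * Real.exp (θ*z.2)) * (B z.1 ω * B z.2 ω)‖ ∂P‖
            ≤ (Real.exp (θ*z.1) * Real.exp (θ*z.2)) * ((z.1^p + z.2^p)/2)
          rw [Real.norm_eq_abs, h2, abs_of_nonneg (mul_nonneg (by positivity)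
            (integral_nonneg fun ω => abs_nonneg _))]
          exact mul_le_mul_of_nonneg_left (hprodInt z.1 z.2 hz.1.1 hz.2.1) (by positivity)
    -- pointwise identities
    have hBtIeq : ∀ ω, B t ω * I ω
        = ∫ s in Set.Ioc (0:ℝ) t, Real.exp (θ*s) * (B t ω * B s ω) := by
      intro ω
      calc B t ω * I ω
          = ∫ s in Set.Ioc (0:ℝ) t, B t ω * (Real.exp (θ*s) * B s ω) :=
            (MeasureTheory.integral_const_mul _ _).symm
        _ = ∫ s in Set.Ioc (0:ℝ) t, Real.exp (θ*s) * (B t ω * B s ω) :=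
            integral_congr_ae (Eventually.of_forall fun s => by ring)
    have hIsq : ∀ ω, I ω * I ω = ∫ z, (Real.exp (θ*z.1) * Real.exp (θ*z.2)) *
        (B z.1 ω * B z.2 ω)
        ∂((volume.restrict (Set.Ioc (0:ℝ) t)).prod (volume.restrict (Set.Ioc (0:ℝ) t))) := by
      intro ω
      rw [show I ω * I ω = (∫ s in Set.Ioc (0:ℝ) t, Real.exp (θ*s) * B s ω) *
          (∫ s in Set.Ioc (0:ℝ) t, Real.exp (θ*s) * B s ω) from rfl,
        ← MeasureTheory.integral_prod_mul (f := fun s => Real.exp (θ*s) * B s ω)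
          (g := fun u => Real.exp (θ*u) * B u ω)]
      exact integral_congr_ae (Eventually.of_forall fun z => by show _ = _; ring)
    have intCross : Integrable (fun ω => B t ω * I ω) P :=
      key1.integral_prod_right.congr (Eventually.of_forall fun ω => (hBtIeq ω).symm)
    have intIsq : Integrable (fun ω => I ω * I ω) P :=
      key2.integral_prod_right.congr (Eventually.of_forall fun ω => (hIsq ω).symm)
    -- cross value
    have crossVal : ∫ ω, B t ω * I ω ∂P
        = ∫ s in Set.Ioc (0:ℝ) t, Real.exp (θ*s) * ((t^p + s^p - |s - t|^p)/2) := by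
      have hswap1 := MeasureTheory.integral_integral_swap
        (μ := volume.restrict (Set.Ioc (0:ℝ) t)) (ν := P)
        (f := fun s ω => Real.exp (θ*s) * (B t ω * B s ω)) key1
      rw [integral_congr_ae (Eventually.of_forall hBtIeq), ← hswap1]
      refine setIntegral_congr_fun measurableSet_Ioc fun s hs => ?_
      rw [MeasureTheory.integral_const_mul, hcov t s ht.le hs.1.le]
    -- double value
    have doubleVal : ∫ ω, I ω * I ω ∂P
        = ∫ s in Set.Ioc (0:ℝ) t, Real.exp (θ*s) *
            (∫ u in (0:ℝ)..t, Real.exp (θ*u) * ((s^p + u^p - |u - s|^p)/2)) := by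
      have hswap2 := MeasureTheory.integral_integral_swap
        (μ := (volume.restrict (Set.Ioc (0:ℝ) t)).prod (volume.restrict (Set.Ioc (0:ℝ) t)))
        (ν := P) (f := fun z (ω : Ω) =>
          (Real.exp (θ*z.1) * Real.exp (θ*z.2)) * (B z.1 ω * B z.2 ω)) key2
      rw [integral_congr_ae (Eventually.of_forall hIsq), ← hswap2]
      have hint2 : Integrable (fun z : ℝ × ℝ => Real.exp (θ*z.1) *
          (Real.exp (θ*z.2) * ((z.1^p + z.2^p - |z.2 - z.1|^p)/2)))
          ((volume.restrict (Set.Ioc (0:ℝ) t)).prod (volume.restrict (Set.Ioc (0:ℝ) t))) := by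
        refine key2.integral_prod_left.congr ?_
        filter_upwards [haemem2] with z hz
        show (∫ ω, (Real.exp (θ*z.1) * Real.exp (θ*z.2)) * (B z.1 ω * B z.2 ω) ∂P) = _
        rw [MeasureTheory.integral_const_mul, hcov z.1 z.2 hz.1.1.le hz.2.1.le]
        ring
      have hzcongr : (∫ z, (∫ ω, (Real.exp (θ*z.1) * Real.exp (θ*z.2)) * (B z.1 ω * B z.2 ω) ∂P)
            ∂((volume.restrict (Set.Ioc (0:ℝ) t)).prod (volume.restrict (Set.Ioc (0:ℝ) t))))
          = ∫ z, Real.exp (θ*z.1) * (Real.exp (θ*z.2) * ((z.1^p + z.2^p - |z.2 - z.1|^p)/2))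
            ∂((volume.restrict (Set.Ioc (0:ℝ) t)).prod (volume.restrict (Set.Ioc (0:ℝ) t))) := by
        refine integral_congr_ae ?_
        filter_upwards [haemem2] with z hz
        rw [MeasureTheory.integral_const_mul, hcov z.1 z.2 hz.1.1.le hz.2.1.le]
        ring
      rw [hzcongr, MeasureTheory.integral_prod _ hint2]
      refine setIntegral_congr_fun measurableSet_Ioc fun s hs => ?_
      show (∫ y in Set.Ioc (0:ℝ) t,
        Real.exp (θ*s) * (Real.exp (θ*y) * ((s^p + y^p - |y - s|^p)/2))) = _
      rw [MeasureTheory.integral_const_mul, ← intervalIntegral.integral_of_le ht.le]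
    -- expand the square
    have hsplit : (∫ ω, (Real.exp (-θ * t) *
          (Real.exp (θ * t) * B t ω - θ * ∫ s in (0:ℝ)..t, Real.exp (θ * s) * B s ω)) ^ 2 ∂P)
        = (∫ ω, B t ω * B t ω ∂P) - 2*(θ*Real.exp (-θ*t)) * (∫ ω, B t ω * I ω ∂P)
            + (θ*Real.exp (-θ*t))^2 * ∫ ω, I ω * I ω ∂P := by
      have hptw : ∀ ω, (Real.exp (-θ * t) *
          (Real.exp (θ * t) * B t ω - θ * ∫ s in (0:ℝ)..t, Real.exp (θ * s) * B s ω)) ^ 2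
          = B t ω * B t ω - 2*(θ*Real.exp (-θ*t)) * (B t ω * I ω)
              + (θ*Real.exp (-θ*t))^2 * (I ω * I ω) := by
        intro ω
        have hIome : (∫ s in (0:ℝ)..t, Real.exp (θ * s) * B s ω) = I ω :=
          intervalIntegral.integral_of_le ht.le
        rw [hIome]
        have k : Real.exp (-θ*t) * Real.exp (θ*t) = 1 := by
          rw [← Real.exp_add, show -θ*t + θ*t = 0 by ring, Real.exp_zero]
        have h5 : Real.exp (-θ * t) * (Real.exp (θ * t) * B t ω - θ * I ω)
            = B t ω - (θ*Real.exp (-θ*t)) * I ω := by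
          rw [mul_sub, ← mul_assoc, k, one_mul]; ring
        rw [h5]; ring
      have intC2 : Integrable (fun ω => 2*(θ*Real.exp (-θ*t)) * (B t ω * I ω)) P :=
        intCross.const_mul _
      have intI2 : Integrable (fun ω => (θ*Real.exp (-θ*t))^2 * (I ω * I ω)) P :=
        intIsq.const_mul _
      have intSub : Integrable
          (fun ω => B t ω * B t ω - 2*(θ*Real.exp (-θ*t)) * (B t ω * I ω)) P :=
        (hBsq t ht).sub intC2
      rw [integral_congr_ae (Eventually.of_forall hptw), integral_add intSub intI2,
        integral_sub (hBsq t ht) intC2,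
        MeasureTheory.integral_const_mul, MeasureTheory.integral_const_mul]
    rw [hsplit, hBsqval t ht, crossVal, doubleVal]
    simp only [← intervalIntegral.integral_of_le ht.le]
    rw [intA hθ hp ht.le, intC hθ hp ht.le]
    exact Valgebra hθ hp t
  -- limits
  have hWlim : Tendsto (fun t : ℝ => t^p * Real.exp (-θ*t) + (θ/2) * Fc (-θ) p t
      - (θ/2) * (Real.exp (-θ*t))^2 * Fc θ p t) atTop
      (nhds (0 + (θ/2) * ((1/θ)^(p+1) * Real.Gamma (p+1)) - (θ/2) * 0)) := by
    refine Tendsto.sub (Tendsto.add ?_ ?_) ?_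
    · exact tendsto_rpow_mul_exp_neg_mul_atTop_nhds_zero p θ hθ
    · exact (Glim hθ hp).const_mul (θ/2)
    · have h6 := (explim2 hθ hp).const_mul (θ/2)
      refine h6.congr fun t => ?_
      ring
  have hconst : (0:ℝ) + (θ/2) * ((1/θ)^(p+1) * Real.Gamma (p+1)) - (θ/2) * 0
      = H * Real.Gamma p / θ ^ p := by
    rw [Real.Gamma_add_one hp.ne', Real.rpow_add (by positivity : (0:ℝ) < 1/θ) p 1,
      Real.rpow_one, one_div, Real.inv_rpow hθ.le,
      show H = p/2 by rw [hpdef]; ring]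
    have h7 : θ ^ p ≠ 0 := (Real.rpow_pos_of_pos hθ p).ne'
    field_simp
    ring
  rw [hconst] at hWlim
  refine Tendsto.congr' ?_ hWlim
  filter_upwards [eventually_gt_atTop (0:ℝ)] with t ht using (main t ht).symm
end

section
/- Let B^H be a fractional Brownian motion with Hurst parameter H ∈ (0,1), θ > 0, and s ≥ 0 fixed. Then E[B^H_s · e^{-θt}(e^{θt}B^H_t − θ∫₀ᵗ e^{θr} B^H_r dr)] → 0 as t → ∞. -/
open Real Filter MeasureTheory

private lemma mul_integrable_of_sq {Ω : Type*} [MeasurableSpace Ω] {P : Measure Ω}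
    {f g : Ω → ℝ} (hfm : AEStronglyMeasurable f P) (hgm : AEStronglyMeasurable g P)
    (hf : Integrable (fun ω => f ω * f ω) P) (hg : Integrable (fun ω => g ω * g ω) P) :
    Integrable (fun ω => f ω * g ω) P := by
  refine Integrable.mono' ((hf.add hg).div_const 2) (hfm.mul hgm) ?_
  refine Eventually.of_forall fun ω => ?_
  rw [Real.norm_eq_abs, abs_mul]
  simp only [Pi.add_apply]
  nlinarith [sq_nonneg (|f ω| - |g ω|), sq_abs (f ω), sq_abs (g ω),
    abs_nonneg (f ω), abs_nonneg (g ω)]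

private lemma rpow_diff_tendsto {β s : ℝ} (hβ1 : β < 1) (hs : 0 < s) :
    Tendsto (fun r : ℝ => r ^ β - (r - s) ^ β) atTop (nhds 0) := by
  rcases lt_or_ge β 0 with hβ | hβ
  · have h1 : Tendsto (fun r : ℝ => r ^ β) atTop (nhds 0) := by
      have := tendsto_rpow_neg_atTop (y := -β) (by linarith)
      simpa using this
    have h2 : Tendsto (fun r : ℝ => (r - s) ^ β) atTop (nhds 0) := by
      have hsub : Tendsto (fun r : ℝ => r - s) atTop atTop :=
        tendsto_atTop_add_const_right atTop (-s) tendsto_id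
      exact h1.comp hsub
    simpa using h1.sub h2
  · have hub : Tendsto (fun r : ℝ => s * r ^ (β - 1)) atTop (nhds 0) := by
      have h1 : Tendsto (fun r : ℝ => r ^ (β - 1)) atTop (nhds 0) := by
        have := tendsto_rpow_neg_atTop (y := 1 - β) (by linarith)
        simpa [neg_sub] using this
      simpa using h1.const_mul s
    refine squeeze_zero' ?_ ?_ hub
    · filter_upwards [eventually_ge_atTop (s + 1)] with r hr
      have h1 : (0:ℝ) ≤ r - s := by linarith
      have h2 : r - s ≤ r := by linarith
      have := Real.rpow_le_rpow h1 h2 hβ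
      linarith
    · filter_upwards [eventually_ge_atTop (s + 1)] with r hr
      have hr0 : (0:ℝ) < r := by linarith
      have hrs : (0:ℝ) < r - s := by linarith
      have hdiv : (0:ℝ) < (r - s) / r := div_pos hrs hr0
      have hdiv1 : (r - s) / r ≤ 1 := by
        rw [div_le_one hr0]; linarith
      have key : r ^ β * ((r - s) / r) ≤ (r - s) ^ β := by
        have h1 : ((r - s) / r) ^ (1:ℝ) ≤ ((r - s) / r) ^ β :=
          Real.rpow_le_rpow_of_exponent_ge hdiv hdiv1 hβ1.le
        have h2 : r ^ β * (((r - s) / r) ^ β) = (r - s) ^ β := by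
          rw [← Real.mul_rpow hr0.le (div_nonneg hrs.le hr0.le)]
          rw [mul_div_cancel₀ _ (ne_of_gt hr0)]
        calc r ^ β * ((r - s) / r) = r ^ β * (((r - s) / r) ^ (1:ℝ)) := by
              rw [Real.rpow_one]
          _ ≤ r ^ β * (((r - s) / r) ^ β) := by
              apply mul_le_mul_of_nonneg_left h1 (Real.rpow_nonneg hr0.le β)
          _ = (r - s) ^ β := h2
      have hpow : r ^ β / r = r ^ (β - 1) := by
        rw [Real.rpow_sub hr0, Real.rpow_one]
      calc r ^ β - (r - s) ^ β ≤ r ^ β - r ^ β * ((r - s) / r) := by linarith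
        _ = r ^ β / r * s := by field_simp; ring
        _ = s * r ^ (β - 1) := by rw [hpow]; ring

private lemma exp_theta_deriv {θ : ℝ} (hθ : 0 < θ) (r : ℝ) :
    HasDerivAt (fun x => Real.exp (θ * x) / θ) (Real.exp (θ * r)) r := by
  have h1 : HasDerivAt (fun x : ℝ => θ * x) θ r := by
    simpa using (hasDerivAt_id r).const_mul θ
  have h2 := (Real.hasDerivAt_exp (θ * r)).comp r h1
  have h3 := h2.div_const θ
  refine h3.congr_deriv ?_
  field_simp

private lemma decay_aux {θ a : ℝ} (hθ : 0 < θ) {h : ℝ → ℝ}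
    (hc : ∀ r, a ≤ r → ContinuousAt h r) (h0 : Tendsto h atTop (nhds 0)) :
    Tendsto (fun t => Real.exp (-(θ * t)) * ∫ r in a..t, Real.exp (θ * r) * h r)
      atTop (nhds 0) := by
  have hcont : ∀ u v : ℝ, a ≤ u → a ≤ v →
      IntervalIntegrable (fun r => Real.exp (θ * r) * |h r|) volume u v := by
    intro u v hu hv
    apply ContinuousOn.intervalIntegrable
    intro x hx
    have hax : a ≤ x := by
      rcases Set.mem_uIcc.1 hx with ⟨h1, _⟩ | ⟨h1, _⟩ <;> linarith
    exact (((Real.continuous_exp.comp (continuous_const.mul continuous_id)).continuousAt).mul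
      ((hc x hax).abs)).continuousWithinAt
  have hcont' : ∀ u v : ℝ, a ≤ u → a ≤ v →
      IntervalIntegrable (fun r => Real.exp (θ * r) * h r) volume u v := by
    intro u v hu hv
    apply ContinuousOn.intervalIntegrable
    intro x hx
    have hax : a ≤ x := by
      rcases Set.mem_uIcc.1 hx with ⟨h1, _⟩ | ⟨h1, _⟩ <;> linarith
    exact (((Real.continuous_exp.comp (continuous_const.mul continuous_id)).continuousAt).mul
      (hc x hax)).continuousWithinAt
  rw [Metric.tendsto_atTop]
  intro ε hε
  -- find T beyond which |h| is small
  have hev : ∀ᶠ r in atTop, |h r| < ε * θ / 4 := by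
    have := Metric.tendsto_nhds.mp h0 (ε * θ / 4) (by positivity)
    simpa [Real.dist_eq] using this
  obtain ⟨T₀, hT₀⟩ := eventually_atTop.1 hev
  set T := max T₀ a with hTdef
  have hTa : a ≤ T := le_max_right _ _
  have hT : ∀ r, T ≤ r → |h r| ≤ ε * θ / 4 := fun r hr =>
    (hT₀ r (le_trans (le_max_left _ _) hr)).le
  set M := ∫ r in a..T, Real.exp (θ * r) * |h r| with hM
  -- find N beyond which exp decay kills M
  have hexp0 : Tendsto (fun t : ℝ => Real.exp (-(θ * t)) * (M + 1)) atTop (nhds 0) := by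
    have h1 : Tendsto (fun t : ℝ => θ * t) atTop atTop :=
      Tendsto.const_mul_atTop hθ tendsto_id
    have h1' : Tendsto (fun t : ℝ => -(θ * t)) atTop atBot :=
      tendsto_neg_atTop_atBot.comp h1
    have := (Real.tendsto_exp_atBot.comp h1').mul_const (M + 1)
    simpa using this
  have hev2 : ∀ᶠ t in atTop, Real.exp (-(θ * t)) * (M + 1) < ε / 2 := by
    have := Metric.tendsto_nhds.mp hexp0 (ε / 2) (by positivity)
    filter_upwards [this] with t ht
    rw [Real.dist_eq] at ht
    calc Real.exp (-(θ * t)) * (M + 1) ≤ |Real.exp (-(θ * t)) * (M + 1) - 0| := by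
          rw [sub_zero]; exact le_abs_self _
      _ < ε / 2 := ht
  obtain ⟨N₀, hN₀⟩ := eventually_atTop.1 hev2
  refine ⟨max N₀ T, fun t ht => ?_⟩
  have htN : N₀ ≤ t := le_trans (le_max_left _ _) ht
  have htT : T ≤ t := le_trans (le_max_right _ _) ht
  have hta : a ≤ t := le_trans hTa htT
  rw [Real.dist_eq, sub_zero, abs_mul, Real.abs_exp]
  have habs : |∫ r in a..t, Real.exp (θ * r) * h r| ≤ ∫ r in a..t, Real.exp (θ * r) * |h r| := by
    calc |∫ r in a..t, Real.exp (θ * r) * h r| ≤ ∫ r in a..t, |Real.exp (θ * r) * h r| :=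
          intervalIntegral.abs_integral_le_integral_abs hta
      _ = ∫ r in a..t, Real.exp (θ * r) * |h r| := by
          apply intervalIntegral.integral_congr
          intro x _
          simp [abs_mul, Real.abs_exp]
  have hsplit : ∫ r in a..t, Real.exp (θ * r) * |h r| =
      M + ∫ r in T..t, Real.exp (θ * r) * |h r| := by
    rw [hM, intervalIntegral.integral_add_adjacent_intervals (hcont a T le_rfl hTa)
      (hcont T t hTa hta)]
  have htail : ∫ r in T..t, Real.exp (θ * r) * |h r| ≤
      (Real.exp (θ * t) - Real.exp (θ * T)) / θ * (ε * θ / 4) := by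
    have hmono : ∫ r in T..t, Real.exp (θ * r) * |h r| ≤
        ∫ r in T..t, Real.exp (θ * r) * (ε * θ / 4) := by
      apply intervalIntegral.integral_mono_on htT (hcont T t hTa hta)
      · exact (ContinuousOn.intervalIntegrable (by fun_prop))
      · intro x hx
        have := hT x hx.1
        have := Real.exp_pos (θ * x)
        nlinarith
    have hval : ∫ r in T..t, Real.exp (θ * r) * (ε * θ / 4) =
        (Real.exp (θ * t) - Real.exp (θ * T)) / θ * (ε * θ / 4) := by
      rw [intervalIntegral.integral_mul_const]
      congr 1
      have := intervalIntegral.integral_eq_sub_of_hasDerivAt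
        (a := T) (b := t)
        (f := fun x => Real.exp (θ * x) / θ) (f' := fun x => Real.exp (θ * x))
        (fun x _ => exp_theta_deriv hθ x)
        (ContinuousOn.intervalIntegrable (by fun_prop))
      rw [this]
      ring
    linarith
  have hMnn : 0 ≤ ∫ r in T..t, Real.exp (θ * r) * |h r| := by
    apply intervalIntegral.integral_nonneg htT
    intro x _; positivity
  have hepos := Real.exp_pos (-(θ * t))
  have hle : Real.exp (-(θ * t)) * |∫ r in a..t, Real.exp (θ * r) * h r| ≤
      Real.exp (-(θ * t)) * (M + (Real.exp (θ * t) - Real.exp (θ * T)) / θ * (ε * θ / 4)) := by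
    apply mul_le_mul_of_nonneg_left _ hepos.le
    rw [hsplit] at habs
    linarith
  have hfinal : Real.exp (-(θ * t)) * (M + (Real.exp (θ * t) - Real.exp (θ * T)) / θ * (ε * θ / 4))
      < ε := by
    have h1 : Real.exp (-(θ * t)) * (M + 1) < ε / 2 := hN₀ t htN
    have h2 : Real.exp (-(θ * t)) * ((Real.exp (θ * t) - Real.exp (θ * T)) / θ * (ε * θ / 4)) ≤
        ε / 4 := by
      have hp := Real.exp_pos (θ * t)
      have hq := Real.exp_pos (θ * T)
      have hmulone : Real.exp (-(θ * t)) * Real.exp (θ * t) = 1 := by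
        rw [← Real.exp_add]; simp
      have hsimp : (Real.exp (θ * t) - Real.exp (θ * T)) / θ * (ε * θ / 4) =
          (Real.exp (θ * t) - Real.exp (θ * T)) * (ε / 4) := by
        field_simp
      rw [hsimp]
      nlinarith [mul_nonneg hepos.le hq.le]
    have hMle : Real.exp (-(θ * t)) * M ≤ Real.exp (-(θ * t)) * (M + 1) := by
      nlinarith
    calc Real.exp (-(θ * t)) * (M + (Real.exp (θ * t) - Real.exp (θ * T)) / θ * (ε * θ / 4))
        = Real.exp (-(θ * t)) * M +
          Real.exp (-(θ * t)) * ((Real.exp (θ * t) - Real.exp (θ * T)) / θ * (ε * θ / 4)) := by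
          ring
      _ ≤ Real.exp (-(θ * t)) * (M + 1) + ε / 4 := by linarith
      _ < ε / 2 + ε / 4 := by linarith
      _ < ε := by linarith
  linarith

private noncomputable def fcov (H s r : ℝ) : ℝ :=
  (s ^ (2*H) + r ^ (2*H) - |r - s| ^ (2*H)) / 2

private lemma det_limit {H θ s : ℝ} (hH : H ∈ Set.Ioo (0:ℝ) 1) (hθ : 0 < θ) (hs : 0 ≤ s) :
    Tendsto (fun t => fcov H s t -
      θ * (Real.exp (-(θ*t)) * ∫ r in (0:ℝ)..t, Real.exp (θ*r) * fcov H s r))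
      atTop (nhds 0) := by
  obtain ⟨hH0, hH1⟩ := hH
  set α := 2*H with hα
  have hα0 : 0 < α := by positivity
  have hα2 : α < 2 := by simp only [hα]; linarith
  -- continuity of fcov in r
  have hfc : Continuous (fun r => fcov H s r) := by
    have h1 : Continuous (fun r : ℝ => r ^ α) := by
      apply continuous_iff_continuousAt.2
      intro x
      exact Real.continuousAt_rpow_const x α (Or.inr hα0.le)
    have h2 : Continuous (fun r : ℝ => |r - s| ^ α) := by
      apply Continuous.comp h1
      exact (continuous_id.sub continuous_const).abs
    unfold fcov
    fun_prop
  -- derivative function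
  set hfn : ℝ → ℝ := fun r => H * (r ^ (α - 1) - (r - s) ^ (α - 1)) with hfndef
  have hfn_cont : ∀ r, s + 1 ≤ r → ContinuousAt hfn r := by
    intro r hr
    have hr0 : (0:ℝ) < r := by linarith
    have hrs : (0:ℝ) < r - s := by linarith
    apply ContinuousAt.mul continuousAt_const
    apply ContinuousAt.sub
    · exact Real.continuousAt_rpow_const r (α-1) (Or.inl (ne_of_gt hr0))
    · have h1 : ContinuousAt (fun x : ℝ => x - s) r :=
        (continuous_id.sub continuous_const).continuousAt
      exact h1.rpow_const (Or.inl (ne_of_gt hrs))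
  have hfn_lim : Tendsto hfn atTop (nhds 0) := by
    rcases eq_or_lt_of_le hs with hs0 | hs0
    · have : hfn = fun r => 0 := by
        funext r; simp [hfndef, ← hs0]
      rw [this]; exact tendsto_const_nhds
    · have := (rpow_diff_tendsto (β := α - 1) (by linarith) hs0).const_mul H
      simpa [hfndef] using this
  -- the smooth version of fcov on [s, ∞)
  set ft : ℝ → ℝ := fun r => (s ^ α + r ^ α - (r - s) ^ α) / 2 with hftdef
  have hfeq : ∀ r, s ≤ r → fcov H s r = ft r := by
    intro r hr
    simp only [fcov, hftdef, hα, abs_of_nonneg (by linarith : (0:ℝ) ≤ r - s)]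
  -- derivative of exp(θ x) * ft x
  have hderiv : ∀ r, s + 1 ≤ r →
      HasDerivAt (fun x => Real.exp (θ * x) * ft x)
        (θ * (Real.exp (θ * r) * ft r) + Real.exp (θ * r) * hfn r) r := by
    intro r hr
    have hr0 : (0:ℝ) < r := by linarith
    have hrs : (0:ℝ) < r - s := by linarith
    have hE : HasDerivAt (fun x => Real.exp (θ * x)) (θ * Real.exp (θ * r)) r := by
      have h1 : HasDerivAt (fun x : ℝ => θ * x) θ r := by
        simpa using (hasDerivAt_id r).const_mul θ
      have := (Real.hasDerivAt_exp (θ * r)).comp r h1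
      exact this.congr_deriv (mul_comm _ _)
    have hx : HasDerivAt (fun x : ℝ => x ^ α) (α * r ^ (α - 1)) r :=
      Real.hasDerivAt_rpow_const (Or.inl (ne_of_gt hr0))
    have hxs : HasDerivAt (fun x : ℝ => (x - s) ^ α) (α * (r - s) ^ (α - 1)) r := by
      have h1 : HasDerivAt (fun x : ℝ => x - s) 1 r := (hasDerivAt_id r).sub_const s
      have := h1.rpow_const (p := α) (Or.inl (ne_of_gt hrs))
      simpa using this
    have hft : HasDerivAt ft ((α * r ^ (α - 1) - α * (r - s) ^ (α - 1)) / 2) r := by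
      have := ((hx.const_add (s ^ α)).sub hxs).div_const 2
      simpa [hftdef] using this
    have := hE.mul hft
    refine this.congr_deriv ?_
    simp only [hfndef, hα]
    ring
  -- main eventual identity
  have hexp_cont : Continuous (fun r : ℝ => Real.exp (θ * r)) := by fun_prop
  set C : ℝ := Real.exp (θ * (s+1)) * ft (s+1) -
      θ * ∫ r in (0:ℝ)..(s+1), Real.exp (θ*r) * fcov H s r with hC
  have hkey : ∀ t : ℝ, s + 1 ≤ t →
      fcov H s t - θ * (Real.exp (-(θ*t)) * ∫ r in (0:ℝ)..t, Real.exp (θ*r) * fcov H s r) =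
      Real.exp (-(θ*t)) * C +
        Real.exp (-(θ*t)) * ∫ r in (s+1)..t, Real.exp (θ*r) * hfn r := by
    intro t ht
    have hst : s ≤ t := by linarith
    have h0s1 : (0:ℝ) ≤ s + 1 := by linarith
    have hint1 : IntervalIntegrable (fun r => Real.exp (θ*r) * fcov H s r) volume 0 (s+1) :=
      (hexp_cont.mul hfc).intervalIntegrable _ _
    have hint2 : IntervalIntegrable (fun r => Real.exp (θ*r) * fcov H s r) volume (s+1) t :=
      (hexp_cont.mul hfc).intervalIntegrable _ _
    have hsplit : ∫ r in (0:ℝ)..t, Real.exp (θ*r) * fcov H s r =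
        (∫ r in (0:ℝ)..(s+1), Real.exp (θ*r) * fcov H s r) +
        ∫ r in (s+1)..t, Real.exp (θ*r) * fcov H s r :=
      (intervalIntegral.integral_add_adjacent_intervals hint1 hint2).symm
    have hcongr : ∫ r in (s+1)..t, Real.exp (θ*r) * fcov H s r =
        ∫ r in (s+1)..t, Real.exp (θ*r) * ft r := by
      apply intervalIntegral.integral_congr
      intro x hx
      rw [Set.uIcc_of_le ht] at hx
      have : s ≤ x := by have := hx.1; linarith
      simp [hfeq x this]
    -- continuity of ft
    have hft_cont : Continuous ft := by
      have h1 : Continuous (fun r : ℝ => r ^ α) := by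
        apply continuous_iff_continuousAt.2
        intro x
        exact Real.continuousAt_rpow_const x α (Or.inr hα0.le)
      have h2 : Continuous (fun r : ℝ => (r - s) ^ α) := by
        apply continuous_iff_continuousAt.2
        intro x
        exact ((continuous_id.sub continuous_const).continuousAt).rpow_const (Or.inr hα0.le)
      rw [hftdef]
      fun_prop
    -- FTC on [s+1, t]
    have hfnCO : ContinuousOn (fun r => Real.exp (θ*r) * hfn r) (Set.uIcc (s+1) t) := by
      intro x hx
      rw [Set.uIcc_of_le ht] at hx
      exact ((hexp_cont.continuousAt).mul (hfn_cont x hx.1)).continuousWithinAt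
    have hintK : IntervalIntegrable (fun r => Real.exp (θ*r) * hfn r) volume (s+1) t :=
      hfnCO.intervalIntegrable
    have hintd : IntervalIntegrable
        (fun r => θ * (Real.exp (θ * r) * ft r) + Real.exp (θ * r) * hfn r) volume (s+1) t := by
      apply IntervalIntegrable.add
      · exact ((continuous_const.mul (hexp_cont.mul hft_cont)).continuousOn).intervalIntegrable
      · exact hintK
    have hFTC : ∫ r in (s+1)..t, (θ * (Real.exp (θ * r) * ft r) + Real.exp (θ * r) * hfn r) =
        Real.exp (θ * t) * ft t - Real.exp (θ * (s+1)) * ft (s+1) := by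
      apply intervalIntegral.integral_eq_sub_of_hasDerivAt
      · intro x hx
        rw [Set.uIcc_of_le ht] at hx
        exact hderiv x hx.1
      · exact hintd
    have hadd : ∫ r in (s+1)..t, (θ * (Real.exp (θ * r) * ft r) + Real.exp (θ * r) * hfn r) =
        θ * (∫ r in (s+1)..t, Real.exp (θ * r) * ft r) +
        ∫ r in (s+1)..t, Real.exp (θ * r) * hfn r := by
      rw [intervalIntegral.integral_add (f := fun r => θ * (Real.exp (θ * r) * ft r))
        (((continuous_const.mul (hexp_cont.mul hft_cont)).continuousOn).intervalIntegrable)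
        hintK, intervalIntegral.integral_const_mul]
    have hθJ2 : θ * (∫ r in (s+1)..t, Real.exp (θ * r) * ft r) =
        Real.exp (θ * t) * ft t - Real.exp (θ * (s+1)) * ft (s+1) -
        ∫ r in (s+1)..t, Real.exp (θ * r) * hfn r := by
      rw [← hFTC, hadd]; ring
    have hexp1 : Real.exp (-(θ*t)) * Real.exp (θ*t) = 1 := by
      rw [← Real.exp_add]; simp
    rw [hsplit, hcongr, hfeq t hst]
    rw [mul_add, mul_add]
    have expand : θ * (Real.exp (-(θ * t)) * ∫ r in (s+1)..t, Real.exp (θ * r) * ft r) =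
        Real.exp (-(θ * t)) * (θ * ∫ r in (s+1)..t, Real.exp (θ * r) * ft r) := by ring
    rw [expand, hθJ2]
    rw [hC]
    have := hexp1
    linear_combination (-(s ^ α + t ^ α - (t - s) ^ α) / 2) * hexp1
  -- now take limits
  have hlim1 : Tendsto (fun t : ℝ => Real.exp (-(θ*t)) * C) atTop (nhds 0) := by
    have h1 : Tendsto (fun t : ℝ => θ * t) atTop atTop :=
      Tendsto.const_mul_atTop hθ tendsto_id
    have h1' : Tendsto (fun t : ℝ => -(θ * t)) atTop atBot :=
      tendsto_neg_atTop_atBot.comp h1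
    have := (Real.tendsto_exp_atBot.comp h1').mul_const C
    simpa using this
  have hlim2 : Tendsto (fun t : ℝ => Real.exp (-(θ*t)) *
      ∫ r in (s+1)..t, Real.exp (θ*r) * hfn r) atTop (nhds 0) :=
    decay_aux hθ hfn_cont hfn_lim
  have hsum := hlim1.add hlim2
  rw [add_zero] at hsum
  apply hsum.congr'
  filter_upwards [eventually_ge_atTop (s+1)] with t ht
  exact (hkey t ht).symm

theorem stmt_12 {Ω : Type*} [MeasureSpace Ω] (P : Measure Ω) [IsProbabilityMeasure P]
    (H θ : ℝ) (hH : H ∈ Set.Ioo (0:ℝ) 1) (hθ : 0 < θ)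
    (B : ℝ → Ω → ℝ)
    (hmeas : Measurable (Function.uncurry B))
    (hcont : ∀ ω, Continuous (fun t => B t ω))
    (hcentered : ∀ t : ℝ, 0 ≤ t → ∫ ω, B t ω ∂P = 0)
    (hcov : ∀ s t : ℝ, 0 ≤ s → 0 ≤ t →
      ∫ ω, B s ω * B t ω ∂P = (s ^ (2 * H) + t ^ (2 * H) - |t - s| ^ (2 * H)) / 2)
    (s : ℝ) (hs : 0 ≤ s) :
    Tendsto (fun t : ℝ => ∫ ω,
        B s ω * (Real.exp (-θ * t) *
          (Real.exp (θ * t) * B t ω - θ * ∫ r in (0:ℝ)..t, Real.exp (θ * r) * B r ω)) ∂P)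
      atTop (nhds 0) := by
  obtain ⟨hH0, hH1⟩ := hH
  have h2H : (0:ℝ) < 2 * H := by linarith
  have hBm : ∀ t : ℝ, Measurable (B t) := fun t =>
    hmeas.comp (measurable_const.prodMk measurable_id)
  have hvar : ∀ t : ℝ, 0 ≤ t → ∫ ω, B t ω * B t ω ∂P = t ^ (2*H) := by
    intro t ht
    rw [hcov t t ht ht, sub_self, abs_zero, Real.zero_rpow (ne_of_gt h2H)]
    ring
  have hsq : ∀ t : ℝ, 0 < t → Integrable (fun ω => B t ω * B t ω) P := by
    intro t ht
    by_contra hni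
    have h0 := integral_undef hni
    rw [hvar t ht.le] at h0
    exact absurd h0 (ne_of_gt (Real.rpow_pos_of_pos ht _))
  rcases eq_or_lt_of_le hs with hs0 | hs0
  · -- s = 0 : B_0 = 0 a.e., so every integral vanishes
    subst hs0
    have hae : ∀ᵐ ω ∂P, B 0 ω = 0 := by
      set u : ℕ → ℝ := fun n => 1/(n+1) with hu
      have hupos : ∀ n, (0:ℝ) < u n := fun n => by positivity
      have hulim : Tendsto u atTop (nhds 0) := tendsto_one_div_add_atTop_nhds_zero_nat
      have hlin : ∀ n, ∫⁻ ω, ENNReal.ofReal (B (u n) ω * B (u n) ω) ∂P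
          = ENNReal.ofReal ((u n) ^ (2*H)) := by
        intro n
        rw [← ofReal_integral_eq_lintegral_ofReal (hsq _ (hupos n))
          (Eventually.of_forall fun ω => mul_self_nonneg _), hvar (u n) (hupos n).le]
      have hFatou := lintegral_liminf_le (μ := P) (u := atTop)
        (f := fun n ω => ENNReal.ofReal (B (u n) ω * B (u n) ω))
        (fun n => ((hBm _).mul (hBm _)).ennreal_ofReal)
      have hR : Filter.liminf (fun n => ENNReal.ofReal ((u n) ^ (2*H))) atTop = 0 := by
        have h1 : Tendsto (fun n => (u n) ^ (2*H)) atTop (nhds 0) := by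
          have hc : ContinuousAt (fun x : ℝ => x ^ (2*H)) 0 :=
            Real.continuousAt_rpow_const 0 _ (Or.inr h2H.le)
          have := hc.tendsto.comp hulim
          simpa [Real.zero_rpow (ne_of_gt h2H), Function.comp_def] using this
        have h2 : Tendsto (fun n => ENNReal.ofReal ((u n) ^ (2*H))) atTop (nhds 0) := by
          have := (ENNReal.continuous_ofReal.tendsto 0).comp h1
          simpa [Function.comp_def] using this
        exact h2.liminf_eq
      have hL : ∀ ω, Filter.liminf (fun n => ENNReal.ofReal (B (u n) ω * B (u n) ω)) atTop
          = ENNReal.ofReal (B 0 ω * B 0 ω) := by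
        intro ω
        have hbc : Tendsto (fun n => B (u n) ω) atTop (nhds (B 0 ω)) :=
          ((hcont ω).tendsto 0).comp hulim
        exact ((ENNReal.continuous_ofReal.tendsto _).comp (hbc.mul hbc)).liminf_eq
      have hz : ∫⁻ ω, ENNReal.ofReal (B 0 ω * B 0 ω) ∂P = 0 := by
        apply le_antisymm _ zero_le
        calc ∫⁻ ω, ENNReal.ofReal (B 0 ω * B 0 ω) ∂P
            = ∫⁻ ω, Filter.liminf (fun n => ENNReal.ofReal (B (u n) ω * B (u n) ω)) atTop ∂P := by
              apply lintegral_congr; intro ω; exact (hL ω).symm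
          _ ≤ Filter.liminf (fun n => ∫⁻ ω, ENNReal.ofReal (B (u n) ω * B (u n) ω) ∂P) atTop :=
              hFatou
          _ = 0 := by simp_rw [hlin]; exact hR
      have hz2 := (lintegral_eq_zero_iff ((hBm 0).mul (hBm 0)).ennreal_ofReal).mp hz
      filter_upwards [hz2] with ω hω
      simp only [Pi.zero_apply] at hω
      have h1 : B 0 ω * B 0 ω ≤ 0 := ENNReal.ofReal_eq_zero.mp hω
      nlinarith [mul_self_nonneg (B 0 ω)]
    have hzero : ∀ t : ℝ, (∫ ω, B 0 ω * (Real.exp (-θ * t) *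
        (Real.exp (θ * t) * B t ω - θ * ∫ r in (0:ℝ)..t, Real.exp (θ * r) * B r ω)) ∂P) = 0 := by
      intro t
      apply integral_eq_zero_of_ae
      filter_upwards [hae] with ω hω
      simp [hω]
    exact tendsto_const_nhds.congr (fun t => (hzero t).symm)
  · -- s > 0
    refine Tendsto.congr' ?_ (det_limit ⟨hH0, hH1⟩ hθ hs)
    filter_upwards [eventually_ge_atTop (s+1)] with t ht
    have ht0 : (0:ℝ) < t := by linarith
    set μt := volume.restrict (Set.Ioc (0:ℝ) t) with hμt
    set g : ℝ → Ω → ℝ := fun r ω => B s ω * (Real.exp (θ * r) * B r ω) with hg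
    have hgm : AEStronglyMeasurable (Function.uncurry g) (μt.prod P) := by
      apply Measurable.aestronglyMeasurable
      have : Function.uncurry g = fun p : ℝ × Ω =>
          B s p.2 * (Real.exp (θ * p.1) * Function.uncurry B p) := rfl
      rw [this]
      exact ((hBm s).comp measurable_snd).mul
        ((Real.measurable_exp.comp (measurable_fst.const_mul θ)).mul hmeas)
    have hfib : ∀ r : ℝ, 0 < r → Integrable (fun ω => g r ω) P := by
      intro r hr0
      have heq : (fun ω => g r ω) = fun ω => Real.exp (θ * r) * (B s ω * B r ω) := by
        funext ω; simp only [hg]; ring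
      rw [heq]
      exact (mul_integrable_of_sq ((hBm s).aestronglyMeasurable)
        ((hBm r).aestronglyMeasurable) (hsq s hs0) (hsq r hr0)).const_mul _
    have hint : Integrable (Function.uncurry g) (μt.prod P) := by
      rw [integrable_prod_iff hgm]
      constructor
      · filter_upwards [ae_restrict_mem measurableSet_Ioc] with r hr
        exact hfib r hr.1
      · have hmeas2 : AEStronglyMeasurable
            (fun r => ∫ ω, ‖Function.uncurry g (r, ω)‖ ∂P) μt :=
          hgm.norm.integral_prod_right'
        refine Integrable.mono'
          (integrable_const (Real.exp (θ * t) * ((s ^ (2*H) + t ^ (2*H)) / 2))) hmeas2 ?_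
        filter_upwards [ae_restrict_mem measurableSet_Ioc] with r hr
        have hr0 : (0:ℝ) < r := hr.1
        have hrt : r ≤ t := hr.2
        have hnn : 0 ≤ ∫ ω, ‖Function.uncurry g (r, ω)‖ ∂P :=
          integral_nonneg fun ω => norm_nonneg _
        rw [Real.norm_eq_abs, abs_of_nonneg hnn]
        have hint2 : Integrable
            (fun ω => Real.exp (θ*r) * ((B s ω * B s ω + B r ω * B r ω)/2)) P :=
          (((hsq s hs0).add (hsq r hr0)).div_const 2).const_mul _
        have hstep : ∫ ω, ‖Function.uncurry g (r, ω)‖ ∂P ≤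
            Real.exp (θ * r) * ((s ^ (2*H) + r ^ (2*H)) / 2) := by
          calc ∫ ω, ‖Function.uncurry g (r, ω)‖ ∂P
              ≤ ∫ ω, Real.exp (θ*r) * ((B s ω * B s ω + B r ω * B r ω)/2) ∂P := by
                apply integral_mono (hfib r hr0).norm hint2
                intro ω
                simp only [Function.uncurry, hg, Real.norm_eq_abs]
                rw [abs_mul, abs_mul, Real.abs_exp]
                have hbase : |B s ω| * |B r ω| ≤ (B s ω * B s ω + B r ω * B r ω)/2 := by
                  nlinarith [sq_nonneg (|B s ω| - |B r ω|), sq_abs (B s ω), sq_abs (B r ω)]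
                have hepos := Real.exp_pos (θ * r)
                calc |B s ω| * (Real.exp (θ*r) * |B r ω|)
                    = Real.exp (θ*r) * (|B s ω| * |B r ω|) := by ring
                  _ ≤ Real.exp (θ*r) * ((B s ω * B s ω + B r ω * B r ω)/2) :=
                      mul_le_mul_of_nonneg_left hbase hepos.le
            _ = Real.exp (θ * r) * ((s ^ (2*H) + r ^ (2*H)) / 2) := by
                rw [integral_const_mul]
                congr 1
                rw [integral_div, integral_add (hsq s hs0) (hsq r hr0),
                  hvar s hs0.le, hvar r hr0.le]
        have hmono2 : Real.exp (θ * r) * ((s ^ (2*H) + r ^ (2*H)) / 2) ≤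
            Real.exp (θ * t) * ((s ^ (2*H) + t ^ (2*H)) / 2) := by
          have h1 : Real.exp (θ * r) ≤ Real.exp (θ * t) :=
            Real.exp_le_exp.2 (by nlinarith)
          have h2 : r ^ (2*H) ≤ t ^ (2*H) := Real.rpow_le_rpow hr0.le hrt h2H.le
          have h3 : (0:ℝ) ≤ s ^ (2*H) := Real.rpow_nonneg hs _
          have h4 : (0:ℝ) ≤ r ^ (2*H) := Real.rpow_nonneg hr0.le _
          have h5 := Real.exp_pos (θ * r)
          nlinarith
        exact hstep.trans hmono2
    -- Fubini
    have hswap := MeasureTheory.integral_integral_swap (μ := μt) (ν := P) (f := g) hint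
    have hA : Integrable (fun ω => B s ω * B t ω) P :=
      mul_integrable_of_sq ((hBm s).aestronglyMeasurable) ((hBm t).aestronglyMeasurable)
        (hsq s hs0) (hsq t ht0)
    set I : Ω → ℝ := fun ω => ∫ r in (0:ℝ)..t, Real.exp (θ * r) * B r ω with hI
    have hIeq : ∀ ω, B s ω * I ω = ∫ r, g r ω ∂μt := by
      intro ω
      show B s ω * (∫ r in (0:ℝ)..t, Real.exp (θ * r) * B r ω) = _
      rw [intervalIntegral.integral_of_le ht0.le, ← integral_const_mul]
    have hB : Integrable (fun ω => B s ω * I ω) P := by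
      have := hint.integral_prod_right
      apply this.congr
      filter_upwards with ω
      exact (hIeq ω).symm
    have hfub : ∫ ω, B s ω * I ω ∂P = ∫ r in (0:ℝ)..t, Real.exp (θ*r) * fcov H s r := by
      have e1 : ∫ ω, B s ω * I ω ∂P = ∫ ω, ∫ r, g r ω ∂μt ∂P := by
        congr 1; funext ω; exact hIeq ω
      have e2 : ∫ r, ∫ ω, g r ω ∂P ∂μt = ∫ r in Set.Ioc (0:ℝ) t, Real.exp (θ*r) * fcov H s r := by
        apply setIntegral_congr_fun measurableSet_Ioc
        intro r hr
        have hr0 : (0:ℝ) < r := hr.1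
        show ∫ ω, g r ω ∂P = _
        have h1 : ∀ ω, g r ω = Real.exp (θ * r) * (B s ω * B r ω) := fun ω => by
          simp only [hg]; ring
        simp_rw [h1]
        rw [integral_const_mul, hcov s r hs hr0.le]
        rfl
      rw [e1, ← hswap, e2, intervalIntegral.integral_of_le ht0.le]
    -- final computation
    have hexp1 : Real.exp (-θ * t) * Real.exp (θ * t) = 1 := by
      rw [← Real.exp_add]; ring_nf; exact Real.exp_zero
    have hneg : Real.exp (-θ * t) = Real.exp (-(θ * t)) := by rw [neg_mul]
    have hptw : ∀ ω, B s ω * (Real.exp (-θ * t) *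
        (Real.exp (θ * t) * B t ω - θ * I ω)) =
        B s ω * B t ω - (θ * Real.exp (-(θ * t))) * (B s ω * I ω) := by
      intro ω
      rw [← hneg]
      linear_combination (B s ω * B t ω) * hexp1
    calc fcov H s t - θ * (Real.exp (-(θ*t)) * ∫ r in (0:ℝ)..t, Real.exp (θ*r) * fcov H s r)
        = (∫ ω, B s ω * B t ω ∂P) - (θ * Real.exp (-(θ * t))) * ∫ ω, B s ω * I ω ∂P := by
          rw [hcov s t hs ht0.le, hfub]
          show fcov H s t - _ = fcov H s t - _
          ring
      _ = ∫ ω, (B s ω * B t ω - (θ * Real.exp (-(θ * t))) * (B s ω * I ω)) ∂P := by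
          rw [integral_sub hA (hB.const_mul _), integral_const_mul]
      _ = ∫ ω, B s ω * (Real.exp (-θ * t) *
            (Real.exp (θ * t) * B t ω - θ * I ω)) ∂P := by
          congr 1; funext ω; exact (hptw ω).symm
end

section
/- For H ∈ (0,1), H ≠ 1/2, θ > 0 and fixed s > 0: e^{-θt} ∫_s^t e^{θr} (r^{2H-1} − (r−s)^{2H-1}) dr → 0 as t → ∞. -/
open Real Filter intervalIntegral

/-- The key deterministic limit: exponentially weighted average of a function tending to 0. -/
lemma aux_exp_avg {θ s : ℝ} (hθ : 0 < θ) (f : ℝ → ℝ)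
    (hint : ∀ a b : ℝ, IntervalIntegrable (fun r => Real.exp (θ * r) * f r)
      MeasureTheory.volume a b)
    (hf : Tendsto f atTop (nhds 0)) :
    Tendsto (fun t : ℝ => Real.exp (-θ * t) * ∫ r in s..t, Real.exp (θ * r) * f r)
      atTop (nhds 0) := by
  rw [NormedAddCommGroup.tendsto_nhds_zero]
  intro ε hε
  obtain ⟨T, hT⟩ := (Metric.tendsto_atTop.mp hf) (θ * ε / 2) (by positivity)
  have hT' : ∀ r ≥ T, |f r| ≤ θ * ε / 2 := by
    intro r hr
    have := hT r hr
    rw [Real.dist_eq, sub_zero] at this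
    linarith
  set C := |∫ r in s..T, Real.exp (θ * r) * f r| with hC
  have h1 : Tendsto (fun t : ℝ => Real.exp (-θ * t) * C) atTop (nhds 0) := by
    have h0 : Tendsto (fun t : ℝ => Real.exp (-θ * t)) atTop (nhds 0) :=
      Real.tendsto_exp_atBot.comp
        ((tendsto_const_mul_atBot_of_neg (neg_neg_of_pos hθ)).mpr tendsto_id)
    simpa using h0.mul_const C
  filter_upwards [h1.eventually_lt_const (show (0:ℝ) < ε / 2 by linarith),
    eventually_ge_atTop T] with t h1t h2t
  -- split the integral
  have hsplit : (∫ r in s..t, Real.exp (θ * r) * f r) =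
      (∫ r in s..T, Real.exp (θ * r) * f r) + ∫ r in T..t, Real.exp (θ * r) * f r :=
    (intervalIntegral.integral_add_adjacent_intervals (hint s T) (hint T t)).symm
  -- bound the tail integral
  have hexp : (∫ r in T..t, Real.exp (θ * r)) = θ⁻¹ * (Real.exp (θ * t) - Real.exp (θ * T)) := by
    rw [intervalIntegral.integral_comp_mul_left Real.exp hθ.ne', integral_exp, smul_eq_mul]
  have htail : |∫ r in T..t, Real.exp (θ * r) * f r| ≤
      θ * ε / 2 * (θ⁻¹ * Real.exp (θ * t)) := by
    calc |∫ r in T..t, Real.exp (θ * r) * f r|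
        ≤ ∫ r in T..t, |Real.exp (θ * r) * f r| :=
          intervalIntegral.abs_integral_le_integral_abs h2t
      _ ≤ ∫ r in T..t, Real.exp (θ * r) * (θ * ε / 2) := by
          apply intervalIntegral.integral_mono_on h2t (hint T t).abs
          · exact ((Real.continuous_exp.comp (continuous_const.mul continuous_id)).continuousOn
              |>.intervalIntegrable).mul_const _
          · intro r hr
            rw [abs_mul, abs_of_pos (Real.exp_pos _)]
            exact mul_le_mul_of_nonneg_left (hT' r hr.1) (Real.exp_pos _).le
      _ = θ * ε / 2 * (θ⁻¹ * (Real.exp (θ * t) - Real.exp (θ * T))) := by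
          rw [intervalIntegral.integral_mul_const, hexp]; ring
      _ ≤ θ * ε / 2 * (θ⁻¹ * Real.exp (θ * t)) := by
          apply mul_le_mul_of_nonneg_left _ (by positivity)
          apply mul_le_mul_of_nonneg_left _ (by positivity)
          linarith [(Real.exp_pos (θ * T)).le]
  have hept : Real.exp (-θ * t) * Real.exp (θ * t) = 1 := by
    rw [← Real.exp_add]; ring_nf; exact Real.exp_zero
  calc ‖Real.exp (-θ * t) * ∫ r in s..t, Real.exp (θ * r) * f r‖
      = Real.exp (-θ * t) * |(∫ r in s..T, Real.exp (θ * r) * f r) +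
          ∫ r in T..t, Real.exp (θ * r) * f r| := by
        rw [hsplit, Real.norm_eq_abs, abs_mul, abs_of_pos (Real.exp_pos _)]
    _ ≤ Real.exp (-θ * t) * (C + |∫ r in T..t, Real.exp (θ * r) * f r|) := by
        apply mul_le_mul_of_nonneg_left _ (Real.exp_pos _).le
        exact abs_add_le _ _
    _ ≤ Real.exp (-θ * t) * C + Real.exp (-θ * t) * (θ * ε / 2 * (θ⁻¹ * Real.exp (θ * t))) := by
        rw [mul_add]
        exact add_le_add_right (mul_le_mul_of_nonneg_left htail (Real.exp_pos _).le) _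
    _ = Real.exp (-θ * t) * C + ε / 2 := by
        rw [show Real.exp (-θ * t) * (θ * ε / 2 * (θ⁻¹ * Real.exp (θ * t))) =
          θ * θ⁻¹ * (ε / 2) * (Real.exp (-θ * t) * Real.exp (θ * t)) by ring,
          hept, mul_one, mul_inv_cancel₀ hθ.ne', one_mul]
    _ < ε := by linarith

lemma aux_tendsto_diff {a s : ℝ} (ha : -1 < a) (ha1 : a < 1) (hs : 0 < s) :
    Tendsto (fun r : ℝ => r ^ a - (r - s) ^ a) atTop (nhds 0) := by
  rcases le_or_gt a 0 with h | h
  · rcases eq_or_lt_of_le h with rfl | h'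
    · simpa using tendsto_const_nhds (x := (0:ℝ)) (f := atTop (α := ℝ))
    · have h1 : Tendsto (fun r : ℝ => r ^ a) atTop (nhds 0) := by
        simpa using tendsto_rpow_neg_atTop (y := -a) (by linarith)
      have h2 : Tendsto (fun r : ℝ => (r - s) ^ a) atTop (nhds 0) :=
        h1.comp (tendsto_atTop_add_const_right atTop (-s) tendsto_id)
      simpa using h1.sub h2
  · -- 0 < a < 1: squeeze between 0 and a * s * (r - s) ^ (a - 1)
    apply squeeze_zero' (g := fun r : ℝ => a * s * (r - s) ^ (a - 1))
    · filter_upwards [eventually_ge_atTop s] with r hr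
      exact sub_nonneg.mpr (Real.rpow_le_rpow (by linarith) (by linarith) h.le)
    · filter_upwards [eventually_gt_atTop s] with r hr
      have hx : 0 < r - s := by linarith
      have key : r ^ a ≤ (r - s) ^ a + a * s * (r - s) ^ (a - 1) := by
        have hrw : r = (r - s) * (1 + s / (r - s)) := by field_simp; ring
        have hb : (0:ℝ) ≤ 1 + s / (r - s) := by positivity
        have hber := rpow_one_add_le_one_add_mul_self
          (s := s / (r - s)) (le_trans (by norm_num) (by positivity : (0:ℝ) ≤ s / (r - s)))
          h.le ha1.le
        calc r ^ a = (r - s) ^ a * (1 + s / (r - s)) ^ a := by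
              rw [← Real.mul_rpow hx.le hb, ← hrw]
          _ ≤ (r - s) ^ a * (1 + a * (s / (r - s))) :=
              mul_le_mul_of_nonneg_left hber (Real.rpow_nonneg hx.le a)
          _ = (r - s) ^ a + a * s * ((r - s) ^ a / (r - s)) := by
              field_simp
          _ = (r - s) ^ a + a * s * (r - s) ^ (a - 1) := by
              rw [← Real.rpow_sub_one hx.ne']
      linarith
    · have h3 : Tendsto (fun r : ℝ => (r - s) ^ (a - 1)) atTop (nhds 0) := by
        have h1 : Tendsto (fun r : ℝ => r ^ (a - 1)) atTop (nhds 0) := by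
          simpa using tendsto_rpow_neg_atTop (y := -(a - 1)) (by linarith)
        exact h1.comp (tendsto_atTop_add_const_right atTop (-s) tendsto_id)
      simpa using h3.const_mul (a * s)

theorem stmt_13 (H θ s : ℝ) (hH : H ∈ Set.Ioo (0:ℝ) 1) (hH' : H ≠ 1 / 2)
    (hθ : 0 < θ) (hs : 0 < s) :
    Tendsto (fun t : ℝ =>
        Real.exp (-θ * t) *
          ∫ r in s..t, Real.exp (θ * r) * (r ^ (2 * H - 1) - (r - s) ^ (2 * H - 1)))
      atTop (nhds 0) := by
  obtain ⟨hH0, hH1⟩ := hH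
  have ha : -1 < 2 * H - 1 := by linarith
  have ha1 : 2 * H - 1 < 1 := by linarith
  apply aux_exp_avg hθ
  · intro a b
    have hcont : ContinuousOn (fun r : ℝ => Real.exp (θ * r)) (Set.uIcc a b) :=
      (Real.continuous_exp.comp (continuous_const.mul continuous_id)).continuousOn
    have h1 : IntervalIntegrable (fun r : ℝ => r ^ (2 * H - 1)) MeasureTheory.volume a b :=
      intervalIntegral.intervalIntegrable_rpow' ha
    have h2 : IntervalIntegrable (fun r : ℝ => (r - s) ^ (2 * H - 1))
        MeasureTheory.volume a b := by
      have h3 := (intervalIntegral.intervalIntegrable_rpow'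
        (a := a - s) (b := b - s) ha).comp_sub_right s
      simpa using h3
    exact (h1.sub h2).continuousOn_mul hcont
  · exact aux_tendsto_diff ha ha1 hs
end

section
/- For H, K ∈ (0,1) and θ > 0: e^{-2θt} ∫₀ᵗ e^{θs} (∫₀ˢ e^{θr} (sr)^{2H−1}(s^{2H}+r^{2H})^{K−2} dr) ds → 0 as t → ∞. -/
open Real Filter intervalIntegral
open MeasureTheory

lemma aux_integrable (c a : ℝ) (ha : -1 < a) (x y : ℝ) :
    IntervalIntegrable (fun r => Real.exp (c*r) * r ^ a) volume x y :=
  (intervalIntegral.intervalIntegrable_rpow' ha).continuousOn_mul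
    (Continuous.continuousOn (by fun_prop))

lemma int_exp (c : ℝ) (hc : c ≠ 0) (x y : ℝ) :
    ∫ r in x..y, Real.exp (c*r) = (Real.exp (c*y) - Real.exp (c*x)) / c := by
  rw [intervalIntegral.integral_comp_mul_left (fun u => Real.exp u) hc, integral_exp,
    smul_eq_mul]
  field_simp

lemma boundB {a c : ℝ} (ha1 : -1 < a) (ha0 : a < 0) (hc : 0 < c) {s : ℝ} (hs : 0 ≤ s) :
    (∫ r in (0:ℝ)..s, Real.exp (c*r) * r ^ a) ≤ (1/(a+1) + 1/c) * Real.exp (c*s) := by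
  have ha1' : 0 < a + 1 := by linarith
  have hrint : ∀ x y : ℝ, IntervalIntegrable (fun r : ℝ => r ^ a) volume x y :=
    fun x y => intervalIntegral.intervalIntegrable_rpow' ha1
  have hzero : (0:ℝ) ^ (a+1) = 0 := Real.zero_rpow (by positivity)
  have hexps : (0:ℝ) < Real.exp (c*s) := Real.exp_pos _
  rcases le_total s 1 with h1 | h1
  · have step : (∫ r in (0:ℝ)..s, Real.exp (c*r) * r ^ a)
        ≤ ∫ r in (0:ℝ)..s, Real.exp (c*s) * r ^ a := by
      apply intervalIntegral.integral_mono_on hs (aux_integrable c a ha1 0 s)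
        ((hrint 0 s).const_mul _)
      intro x hx
      exact mul_le_mul_of_nonneg_right
        (Real.exp_le_exp.2 (by nlinarith [hx.1, hx.2])) (Real.rpow_nonneg hx.1 a)
    rw [intervalIntegral.integral_const_mul, integral_rpow (Or.inl ha1), hzero] at step
    have hs1 : s ^ (a+1) ≤ 1 := Real.rpow_le_one hs h1 ha1'.le
    have h2 : Real.exp (c*s) * ((s ^ (a+1) - 0)/(a+1)) ≤ (1/(a+1) + 1/c) * Real.exp (c*s) := by
      rw [sub_zero]
      have hd : s ^ (a+1) / (a+1) ≤ 1/(a+1) + 1/c := by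
        have : s ^ (a+1)/(a+1) ≤ 1/(a+1) := by gcongr
        have hcp : 0 ≤ 1/c := by positivity
        linarith
      nlinarith
    linarith
  · have hs0 : (0:ℝ) < s := lt_of_lt_of_le one_pos h1
    have hsplit : (∫ r in (0:ℝ)..s, Real.exp (c*r) * r ^ a)
        = (∫ r in (0:ℝ)..1, Real.exp (c*r) * r ^ a)
          + ∫ r in (1:ℝ)..s, Real.exp (c*r) * r ^ a :=
      (intervalIntegral.integral_add_adjacent_intervals
        (aux_integrable c a ha1 0 1) (aux_integrable c a ha1 1 s)).symm
    have b1 : (∫ r in (0:ℝ)..1, Real.exp (c*r) * r ^ a) ≤ Real.exp (c*s) * (1/(a+1)) := by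
      have step : (∫ r in (0:ℝ)..1, Real.exp (c*r) * r ^ a)
          ≤ ∫ r in (0:ℝ)..1, Real.exp (c*s) * r ^ a := by
        apply intervalIntegral.integral_mono_on zero_le_one (aux_integrable c a ha1 0 1)
          ((hrint 0 1).const_mul _)
        intro x hx
        exact mul_le_mul_of_nonneg_right
          (Real.exp_le_exp.2 (by nlinarith [hx.1, hx.2])) (Real.rpow_nonneg hx.1 a)
      rw [intervalIntegral.integral_const_mul, integral_rpow (Or.inl ha1), hzero,
        Real.one_rpow] at step
      calc (∫ r in (0:ℝ)..1, Real.exp (c*r) * r ^ a)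
          ≤ Real.exp (c*s) * ((1 - 0)/(a+1)) := step
        _ = Real.exp (c*s) * (1/(a+1)) := by norm_num
    have b2 : (∫ r in (1:ℝ)..s, Real.exp (c*r) * r ^ a) ≤ Real.exp (c*s) * (1/c) := by
      have step : (∫ r in (1:ℝ)..s, Real.exp (c*r) * r ^ a)
          ≤ ∫ r in (1:ℝ)..s, Real.exp (c*r) := by
        apply intervalIntegral.integral_mono_on h1 (aux_integrable c a ha1 1 s)
          (Continuous.intervalIntegrable (by fun_prop) 1 s)
        intro x hx
        have hx1 : (1:ℝ) ≤ x := hx.1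
        have : x ^ a ≤ 1 := Real.rpow_le_one_of_one_le_of_nonpos hx1 ha0.le
        nlinarith [Real.exp_nonneg (c*x), Real.rpow_nonneg (le_trans zero_le_one hx1) a]
      rw [int_exp c hc.ne' 1 s] at step
      have : (Real.exp (c*s) - Real.exp (c*1))/c ≤ Real.exp (c*s)/c := by
        gcongr
        · linarith [Real.exp_pos (c*1)]
      calc (∫ r in (1:ℝ)..s, Real.exp (c*r) * r ^ a)
          ≤ (Real.exp (c*s) - Real.exp (c*1))/c := step
        _ ≤ Real.exp (c*s)/c := this
        _ = Real.exp (c*s) * (1/c) := by ring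
    rw [hsplit]
    nlinarith

lemma key {H K : ℝ} (hH : H ∈ Set.Ioo (0:ℝ) 1) (hK : K ∈ Set.Ioo (0:ℝ) 1)
    {s r : ℝ} (hs : 0 < s) (hr : 0 < r) :
    (s*r) ^ (2*H-1) * (s^(2*H) + r^(2*H)) ^ (K-2)
      ≤ (2:ℝ)^(K-2) * ((s*r)^(H*K-1)) := by
  obtain ⟨hH0, hH1⟩ := hH
  obtain ⟨hK0, hK1⟩ := hK
  have hsr : 0 < s*r := mul_pos hs hr
  have e1 : s^(2*H) = s^H * s^H := by rw [← Real.rpow_add hs]; ring_nf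
  have e2 : r^(2*H) = r^H * r^H := by rw [← Real.rpow_add hr]; ring_nf
  have e3 : (s*r)^H = s^H * r^H := Real.mul_rpow hs.le hr.le
  have h1 : 2 * (s*r)^H ≤ s^(2*H) + r^(2*H) := by
    rw [e1, e2, e3]; nlinarith [sq_nonneg (s^H - r^H)]
  have h2 : (s^(2*H)+r^(2*H))^(K-2) ≤ (2*(s*r)^H)^(K-2) :=
    Real.rpow_le_rpow_of_nonpos (by positivity) h1 (by linarith)
  calc (s*r) ^ (2*H-1) * (s^(2*H) + r^(2*H)) ^ (K-2)
      ≤ (s*r) ^ (2*H-1) * (2*(s*r)^H)^(K-2) :=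
        mul_le_mul_of_nonneg_left h2 (Real.rpow_nonneg hsr.le _)
    _ = (2:ℝ)^(K-2) * ((s*r)^(H*K-1)) := by
        rw [Real.mul_rpow (by norm_num) (Real.rpow_nonneg hsr.le _),
          ← Real.rpow_mul hsr.le, mul_left_comm, ← Real.rpow_add hsr]
        congr 1
        ring

lemma tendL {a c : ℝ} (ha1 : -1 < a) (ha0 : a < 0) (hc : 0 < c) :
    Tendsto (fun t => Real.exp (-(c*t)) * ∫ s in (0:ℝ)..t, Real.exp (c*s) * s ^ a)
      atTop (nhds 0) := by
  have ha1' : 0 < a+1 := by linarith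
  set U : ℝ → ℝ :=
    fun t => Real.exp (-(c*(t/2))) * ((t/2)^(a+1)/(a+1)) + (t/2)^a / c with hUdef
  have h2 : Tendsto (fun t : ℝ => t/2) atTop atTop := tendsto_id.atTop_div_const two_pos
  have hU : Tendsto U atTop (nhds 0) := by
    have t1 : Tendsto (fun t : ℝ => Real.exp (-(c*(t/2))) * (t/2)^(a+1)) atTop (nhds 0) := by
      have := (tendsto_rpow_mul_exp_neg_mul_atTop_nhds_zero (a+1) c hc).comp h2
      simp only [Function.comp_def] at this
      simpa [mul_comm] using this
    have t2 : Tendsto (fun t : ℝ => (t/2)^a) atTop (nhds 0) := by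
      have := (tendsto_rpow_neg_atTop (neg_pos.2 ha0)).comp h2
      simp only [Function.comp, neg_neg] at this
      exact this
    have := (t1.div_const (a+1)).add (t2.div_const c)
    simpa [hUdef, mul_div_assoc] using this
  apply tendsto_of_tendsto_of_tendsto_of_le_of_le' tendsto_const_nhds hU
  · filter_upwards [eventually_ge_atTop (0:ℝ)] with t ht
    exact mul_nonneg (Real.exp_nonneg _)
      (intervalIntegral.integral_nonneg ht fun u hu =>
        mul_nonneg (Real.exp_nonneg _) (Real.rpow_nonneg hu.1 a))
  · filter_upwards [eventually_gt_atTop (0:ℝ)] with t ht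
    have ht2 : 0 < t/2 := by linarith
    have hsplit : (∫ s in (0:ℝ)..t, Real.exp (c*s) * s ^ a)
        = (∫ s in (0:ℝ)..(t/2), Real.exp (c*s) * s ^ a)
          + ∫ s in (t/2)..t, Real.exp (c*s) * s ^ a :=
      (intervalIntegral.integral_add_adjacent_intervals
        (aux_integrable c a ha1 0 (t/2)) (aux_integrable c a ha1 (t/2) t)).symm
    have bA : (∫ s in (0:ℝ)..(t/2), Real.exp (c*s) * s ^ a)
        ≤ Real.exp (c*(t/2)) * ((t/2)^(a+1)/(a+1)) := by
      have step : (∫ s in (0:ℝ)..(t/2), Real.exp (c*s) * s ^ a)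
          ≤ ∫ s in (0:ℝ)..(t/2), Real.exp (c*(t/2)) * s ^ a := by
        apply intervalIntegral.integral_mono_on ht2.le (aux_integrable c a ha1 0 (t/2))
          ((intervalIntegral.intervalIntegrable_rpow' ha1).const_mul _)
        intro x hx
        exact mul_le_mul_of_nonneg_right
          (Real.exp_le_exp.2 (by nlinarith [hx.1, hx.2])) (Real.rpow_nonneg hx.1 a)
      rw [intervalIntegral.integral_const_mul, integral_rpow (Or.inl ha1),
        Real.zero_rpow (by positivity)] at step
      calc (∫ s in (0:ℝ)..(t/2), Real.exp (c*s) * s ^ a)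
          ≤ Real.exp (c*(t/2)) * (((t/2)^(a+1) - 0)/(a+1)) := step
        _ = Real.exp (c*(t/2)) * ((t/2)^(a+1)/(a+1)) := by rw [sub_zero]
    have bB : (∫ s in (t/2)..t, Real.exp (c*s) * s ^ a)
        ≤ (t/2)^a * (Real.exp (c*t)/c) := by
      have step : (∫ s in (t/2)..t, Real.exp (c*s) * s ^ a)
          ≤ ∫ s in (t/2)..t, (t/2)^a * Real.exp (c*s) := by
        apply intervalIntegral.integral_mono_on (by linarith)
          (aux_integrable c a ha1 (t/2) t)
          ((Continuous.intervalIntegrable (by fun_prop) _ _).const_mul _)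
        intro x hx
        have hxa : x ^ a ≤ (t/2)^a :=
          Real.rpow_le_rpow_of_nonpos ht2 hx.1 ha0.le
        nlinarith [Real.exp_nonneg (c*x), Real.rpow_nonneg (le_trans ht2.le hx.1) a]
      rw [intervalIntegral.integral_const_mul, int_exp c hc.ne'] at step
      have hmono : (Real.exp (c*t) - Real.exp (c*(t/2)))/c ≤ Real.exp (c*t)/c := by
        gcongr
        linarith [Real.exp_pos (c*(t/2))]
      calc (∫ s in (t/2)..t, Real.exp (c*s) * s ^ a)
          ≤ (t/2)^a * ((Real.exp (c*t) - Real.exp (c*(t/2)))/c) := step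
        _ ≤ (t/2)^a * (Real.exp (c*t)/c) :=
            mul_le_mul_of_nonneg_left hmono (Real.rpow_nonneg ht2.le a)
    have eA : Real.exp (-(c*t)) * Real.exp (c*(t/2)) = Real.exp (-(c*(t/2))) := by
      rw [← Real.exp_add]; congr 1; ring
    have eB : Real.exp (-(c*t)) * Real.exp (c*t) = 1 := by
      rw [← Real.exp_add]; simp
    have hfin : Real.exp (-(c*t)) * (Real.exp (c*(t/2)) * ((t/2)^(a+1)/(a+1))
        + (t/2)^a * (Real.exp (c*t)/c)) = U t := by
      have expand : Real.exp (-(c*t)) * (Real.exp (c*(t/2)) * ((t/2)^(a+1)/(a+1))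
          + (t/2)^a * (Real.exp (c*t)/c))
          = (Real.exp (-(c*t)) * Real.exp (c*(t/2))) * ((t/2)^(a+1)/(a+1))
            + (t/2)^a * ((Real.exp (-(c*t)) * Real.exp (c*t))/c) := by ring
      rw [expand, eA, eB, hUdef]
      ring
    calc Real.exp (-(c*t)) * ∫ s in (0:ℝ)..t, Real.exp (c*s) * s ^ a
        ≤ Real.exp (-(c*t)) * (Real.exp (c*(t/2)) * ((t/2)^(a+1)/(a+1))
            + (t/2)^a * (Real.exp (c*t)/c)) := by
          rw [hsplit]
          exact mul_le_mul_of_nonneg_left (by linarith) (Real.exp_nonneg _)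
      _ = U t := hfin

theorem stmt_17 (H K θ : ℝ) (hH : H ∈ Set.Ioo (0:ℝ) 1) (hK : K ∈ Set.Ioo (0:ℝ) 1)
    (hθ : 0 < θ) :
    Tendsto (fun t : ℝ =>
        Real.exp (-2 * θ * t) *
          ∫ s in (0:ℝ)..t, Real.exp (θ * s) *
            ∫ r in (0:ℝ)..s,
              Real.exp (θ * r) * (s * r) ^ (2 * H - 1) * (s ^ (2 * H) + r ^ (2 * H)) ^ (K - 2))
      atTop (nhds 0) := by
  obtain ⟨hH0, hH1⟩ := hH
  obtain ⟨hK0, hK1⟩ := hK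
  set a : ℝ := H*K - 1 with hadef
  have ha1 : -1 < a := by nlinarith
  have ha0 : a < 0 := by nlinarith
  have ha1' : 0 < a + 1 := by linarith
  set C : ℝ := (2:ℝ)^(K-2) with hCdef
  have hC : 0 < C := Real.rpow_pos_of_pos two_pos _
  set M : ℝ := 1/(a+1) + 1/θ with hMdef
  have hM : 0 < M := by positivity
  have h2θ : 0 < 2*θ := by linarith
  apply squeeze_zero_norm'
    (a := fun t => (C*M) * (Real.exp (-((2*θ)*t)) * ∫ s in (0:ℝ)..t, Real.exp ((2*θ)*s) * s^a))
  · filter_upwards [eventually_ge_atTop (0:ℝ)] with t ht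
    have hGint : IntervalIntegrable (fun s => (C*M) * (Real.exp ((2*θ)*s) * s^a)) volume 0 t :=
      (aux_integrable (2*θ) a ha1 0 t).const_mul _
    -- pointwise bound for the outer integrand on Ioc 0 t
    have hptw : ∀ s ∈ Set.Ioc (0:ℝ) t,
        |Real.exp (θ * s) *
            ∫ r in (0:ℝ)..s, Real.exp (θ * r) * (s * r) ^ (2 * H - 1)
              * (s ^ (2 * H) + r ^ (2 * H)) ^ (K - 2)|
          ≤ (C*M) * (Real.exp ((2*θ)*s) * s^a) := by
      intro s hs
      have hs0 : 0 < s := hs.1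
      -- inner integral bound
      have hinner : |∫ r in (0:ℝ)..s, Real.exp (θ * r) * (s * r) ^ (2 * H - 1)
            * (s ^ (2 * H) + r ^ (2 * H)) ^ (K - 2)|
          ≤ (C * s^a) * (M * Real.exp (θ*s)) := by
        have habs := intervalIntegral.abs_integral_le_integral_abs (μ := volume)
          (f := fun r => Real.exp (θ * r) * (s * r) ^ (2 * H - 1)
            * (s ^ (2 * H) + r ^ (2 * H)) ^ (K - 2)) hs0.le
        have hg2int : IntervalIntegrable (fun r => (C * s^a) * (Real.exp (θ*r) * r^a))
            volume 0 s := (aux_integrable θ a ha1 0 s).const_mul _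
        have hmono : (∫ r in (0:ℝ)..s, |Real.exp (θ * r) * (s * r) ^ (2 * H - 1)
              * (s ^ (2 * H) + r ^ (2 * H)) ^ (K - 2)|)
            ≤ ∫ r in (0:ℝ)..s, (C * s^a) * (Real.exp (θ*r) * r^a) := by
          rw [intervalIntegral.integral_of_le hs0.le, intervalIntegral.integral_of_le hs0.le]
          apply MeasureTheory.integral_mono_of_nonneg
            (ae_of_all _ fun r => abs_nonneg _)
          · exact (intervalIntegrable_iff_integrableOn_Ioc_of_le hs0.le).1 hg2int
          · filter_upwards [ae_restrict_mem measurableSet_Ioc] with r hr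
            have hr0 : 0 < r := hr.1
            have hnn : 0 ≤ Real.exp (θ * r) * (s * r) ^ (2 * H - 1)
                * (s ^ (2 * H) + r ^ (2 * H)) ^ (K - 2) := by positivity
            rw [abs_of_nonneg hnn]
            have hkey := key ⟨hH0, hH1⟩ ⟨hK0, hK1⟩ hs0 hr0
            have hmul : (s*r)^(H*K-1) = s^a * r^a := by
              rw [hadef, Real.mul_rpow hs0.le hr0.le]
            calc Real.exp (θ * r) * (s * r) ^ (2 * H - 1)
                  * (s ^ (2 * H) + r ^ (2 * H)) ^ (K - 2)
                = Real.exp (θ * r) * ((s * r) ^ (2 * H - 1)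
                    * (s ^ (2 * H) + r ^ (2 * H)) ^ (K - 2)) := by ring
              _ ≤ Real.exp (θ * r) * (C * ((s*r)^(H*K-1))) :=
                  mul_le_mul_of_nonneg_left hkey (Real.exp_nonneg _)
              _ = (C * s^a) * (Real.exp (θ*r) * r^a) := by rw [hmul]; ring
        have hB : (∫ r in (0:ℝ)..s, (C * s^a) * (Real.exp (θ*r) * r^a))
            ≤ (C * s^a) * (M * Real.exp (θ*s)) := by
          rw [intervalIntegral.integral_const_mul]
          exact mul_le_mul_of_nonneg_left
            (by simpa [hMdef] using boundB ha1 ha0 hθ hs0.le)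
            (by positivity)
        exact le_trans habs (le_trans hmono hB)
      have hexp2 : Real.exp ((2*θ)*s) = Real.exp (θ*s) * Real.exp (θ*s) := by
        rw [← Real.exp_add]; congr 1; ring
      rw [abs_mul, abs_of_pos (Real.exp_pos _)]
      calc Real.exp (θ*s) * |∫ r in (0:ℝ)..s, Real.exp (θ * r) * (s * r) ^ (2 * H - 1)
              * (s ^ (2 * H) + r ^ (2 * H)) ^ (K - 2)|
          ≤ Real.exp (θ*s) * ((C * s^a) * (M * Real.exp (θ*s))) :=
            mul_le_mul_of_nonneg_left hinner (Real.exp_nonneg _)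
        _ = (C*M) * (Real.exp ((2*θ)*s) * s^a) := by rw [hexp2]; ring
    -- assemble outer bound
    have houter : |∫ s in (0:ℝ)..t, Real.exp (θ * s) *
          ∫ r in (0:ℝ)..s, Real.exp (θ * r) * (s * r) ^ (2 * H - 1)
            * (s ^ (2 * H) + r ^ (2 * H)) ^ (K - 2)|
        ≤ ∫ s in (0:ℝ)..t, (C*M) * (Real.exp ((2*θ)*s) * s^a) := by
      refine le_trans (intervalIntegral.abs_integral_le_integral_abs ht) ?_
      rw [intervalIntegral.integral_of_le ht, intervalIntegral.integral_of_le ht]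
      apply MeasureTheory.integral_mono_of_nonneg (ae_of_all _ fun s => abs_nonneg _)
      · exact (intervalIntegrable_iff_integrableOn_Ioc_of_le ht).1 hGint
      · filter_upwards [ae_restrict_mem measurableSet_Ioc] with s hsm
        exact hptw s hsm
    have hnorm : ‖Real.exp (-2 * θ * t) *
          ∫ s in (0:ℝ)..t, Real.exp (θ * s) *
            ∫ r in (0:ℝ)..s, Real.exp (θ * r) * (s * r) ^ (2 * H - 1)
              * (s ^ (2 * H) + r ^ (2 * H)) ^ (K - 2)‖
        = Real.exp (-2 * θ * t) * |∫ s in (0:ℝ)..t, Real.exp (θ * s) *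
            ∫ r in (0:ℝ)..s, Real.exp (θ * r) * (s * r) ^ (2 * H - 1)
              * (s ^ (2 * H) + r ^ (2 * H)) ^ (K - 2)| := by
      rw [Real.norm_eq_abs, abs_mul, abs_of_pos (Real.exp_pos _)]
    rw [hnorm]
    have heq : Real.exp (-2 * θ * t) = Real.exp (-((2*θ)*t)) := by congr 1; ring
    calc Real.exp (-2 * θ * t) * |∫ s in (0:ℝ)..t, Real.exp (θ * s) *
            ∫ r in (0:ℝ)..s, Real.exp (θ * r) * (s * r) ^ (2 * H - 1)
              * (s ^ (2 * H) + r ^ (2 * H)) ^ (K - 2)|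
        ≤ Real.exp (-2 * θ * t) * ∫ s in (0:ℝ)..t, (C*M) * (Real.exp ((2*θ)*s) * s^a) :=
          mul_le_mul_of_nonneg_left houter (Real.exp_nonneg _)
      _ = (C*M) * (Real.exp (-((2*θ)*t)) * ∫ s in (0:ℝ)..t, Real.exp ((2*θ)*s) * s^a) := by
          rw [heq, intervalIntegral.integral_const_mul]; ring
  · have := (tendL ha1 ha0 h2θ).const_mul (C*M)
    simpa using this
end
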